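/- arXiv:2409.05184 — 5 statements merged into one kernel-verified Lean document; each statement's English description precedes it below -/
import Mathlib

section
/- Let g¹, g² ∈ {2,…,T} ∪ {∞} with g := min(g¹,g²) finite, and let t with g ≤ t ≤ T. Assume P(G¹=g¹, G²=g²) > 0, P(D¹_t=0, D²_t=0) > 0 and P(W=1) > 0. Then the unconditional two-event moment equals the corresponding single-event (combined-event) moment computed under P_W: E[Y_t − Y_{g−1} | G¹=g¹, G²=g²] − E[Y_t − Y_{g−1} | D¹_t=0, D²_t=0] = E_{P_W}[Y_t − Y_{g−1} | G=g] − E_{P_W}[Y_t − Y_{g−1} | D_t=0]. -/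
/- Two-event staggered Difference-in-Differences setup (Callaway–Sant'Anna with a
confounding event).  Cohorts take values in `{2,…,T} ∪ {∞} ⊆ ℕ∞`; the potential-outcome
index `0 : ℕ∞` codes "never treated by that event". -/

open MeasureTheory ProbabilityTheory

noncomputable section

namespace TwoEventDiD

variable {Ω : Type*} [MeasurableSpace Ω]

/-- Expectation of `Z` conditional on the event `A`: `E[Z | A]`. -/
def cE (μ : Measure Ω) (A : Set Ω) (Z : Ω → ℝ) : ℝ := ∫ ω, Z ω ∂(μ[|A])

/-- Probability of `B` conditional on the event `A`: `P(B | A)`. -/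
def cP (μ : Measure Ω) (A B : Set Ω) : ℝ := (μ[|A] B).toReal

/-- `g` lies in `{2,…,T} ∪ {∞}`. -/
def InCohort (T : ℕ) (g : ℕ∞) : Prop := g = ⊤ ∨ ((2 : ℕ∞) ≤ g ∧ g ≤ (T : ℕ∞))

/-- Realized outcome `Y_t := Y_t(G¹,G²)`. -/
def Yr (G1 G2 : Ω → ℕ∞) (Y : ℕ → ℕ∞ → ℕ∞ → Ω → ℝ) (t : ℕ) : Ω → ℝ :=
  fun ω => Y t (G1 ω) (G2 ω) ω

/-- Double-group-time average treatment effect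
`ATT(g¹,g²,t) = E[Y_t(g¹,g²) − Y_t(0,0) | G¹=g¹, G²=g²]`. -/
def ATT (μ : Measure Ω) (G1 G2 : Ω → ℕ∞) (Y : ℕ → ℕ∞ → ℕ∞ → Ω → ℝ)
    (g1 g2 : ℕ∞) (t : ℕ) : ℝ :=
  cE μ {ω | G1 ω = g1 ∧ G2 ω = g2} fun ω => Y t g1 g2 ω - Y t 0 0 ω

/-- Target (event-1) treatment effect
`ATT¹(g¹,g²,t) = E[Y_t(g¹,0) − Y_t(0,0) | G¹=g¹, G²=g²]`. -/
def ATT1 (μ : Measure Ω) (G1 G2 : Ω → ℕ∞) (Y : ℕ → ℕ∞ → ℕ∞ → Ω → ℝ)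
    (g1 g2 : ℕ∞) (t : ℕ) : ℝ :=
  cE μ {ω | G1 ω = g1 ∧ G2 ω = g2} fun ω => Y t g1 0 ω - Y t 0 0 ω

/-- Confounding (event-2) treatment effect
`ATT²(g¹,g²,t) = E[Y_t(0,g²) − Y_t(0,0) | G¹=g¹, G²=g²]`. -/
def ATT2 (μ : Measure Ω) (G1 G2 : Ω → ℕ∞) (Y : ℕ → ℕ∞ → ℕ∞ → Ω → ℝ)
    (g1 g2 : ℕ∞) (t : ℕ) : ℝ :=
  cE μ {ω | G1 ω = g1 ∧ G2 ω = g2} fun ω => Y t 0 g2 ω - Y t 0 0 ω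

/-- No Anticipation (unconditional version): before `max(g¹,g²)` the mean outcome of
cohort `(g¹,g²)` coincides with the appropriate less-treated potential outcome. -/
def NoAnticipation (μ : Measure Ω) (G1 G2 : Ω → ℕ∞) (Y : ℕ → ℕ∞ → ℕ∞ → Ω → ℝ)
    (T : ℕ) : Prop :=
  ∀ g1 g2 : ℕ∞, InCohort T g1 → InCohort T g2 →
    0 < μ {ω | G1 ω = g1 ∧ G2 ω = g2} →
    ∀ t : ℕ, 1 ≤ t → (t : ℕ∞) < max g1 g2 →
      ((t : ℕ∞) < min g1 g2 →
        cE μ {ω | G1 ω = g1 ∧ G2 ω = g2} (Y t g1 g2)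
          = cE μ {ω | G1 ω = g1 ∧ G2 ω = g2} (Y t 0 0)) ∧
      (g1 ≤ (t : ℕ∞) ∧ (t : ℕ∞) < g2 →
        cE μ {ω | G1 ω = g1 ∧ G2 ω = g2} (Y t g1 g2)
          = cE μ {ω | G1 ω = g1 ∧ G2 ω = g2} (Y t g1 0)) ∧
      (g2 ≤ (t : ℕ∞) ∧ (t : ℕ∞) < g1 →
        cE μ {ω | G1 ω = g1 ∧ G2 ω = g2} (Y t g1 g2)
          = cE μ {ω | G1 ω = g1 ∧ G2 ω = g2} (Y t 0 g2))


/-- The σ-algebra `σ(X)` generated by the covariates. -/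
def mX {K : ℕ} (X : Ω → Fin K → ℝ) : MeasurableSpace Ω :=
  MeasurableSpace.comap X inferInstance

/-- Conditional No Anticipation (conditional on covariates `X`). -/
def CondNoAnticipation (μ : Measure Ω) (G1 G2 : Ω → ℕ∞) (Y : ℕ → ℕ∞ → ℕ∞ → Ω → ℝ)
    (T : ℕ) {K : ℕ} (X : Ω → Fin K → ℝ) : Prop :=
  ∀ g1 g2 : ℕ∞, InCohort T g1 → InCohort T g2 →
    0 < μ {ω | G1 ω = g1 ∧ G2 ω = g2} →
    ∀ t : ℕ, 1 ≤ t → (t : ℕ∞) < max g1 g2 →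
      ((t : ℕ∞) < min g1 g2 →
        (μ[|{ω | G1 ω = g1 ∧ G2 ω = g2}])[Y t g1 g2 | mX X]
          =ᵐ[μ[|{ω | G1 ω = g1 ∧ G2 ω = g2}]]
        (μ[|{ω | G1 ω = g1 ∧ G2 ω = g2}])[Y t 0 0 | mX X]) ∧
      (g1 ≤ (t : ℕ∞) ∧ (t : ℕ∞) < g2 →
        (μ[|{ω | G1 ω = g1 ∧ G2 ω = g2}])[Y t g1 g2 | mX X]
          =ᵐ[μ[|{ω | G1 ω = g1 ∧ G2 ω = g2}]]
        (μ[|{ω | G1 ω = g1 ∧ G2 ω = g2}])[Y t g1 0 | mX X]) ∧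
      (g2 ≤ (t : ℕ∞) ∧ (t : ℕ∞) < g1 →
        (μ[|{ω | G1 ω = g1 ∧ G2 ω = g2}])[Y t g1 g2 | mX X]
          =ᵐ[μ[|{ω | G1 ω = g1 ∧ G2 ω = g2}]]
        (μ[|{ω | G1 ω = g1 ∧ G2 ω = g2}])[Y t 0 g2 | mX X])

/-- Conditional parallel trends with respect to the never-treated: a common measurable
function of the covariates is a version of both conditional mean untreated trends. -/
def CondPTNever (μ : Measure Ω) (G1 G2 : Ω → ℕ∞) (Y : ℕ → ℕ∞ → ℕ∞ → Ω → ℝ)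
    (T : ℕ) {K : ℕ} (X : Ω → Fin K → ℝ) : Prop :=
  ∀ g1 g2 : ℕ∞, InCohort T g1 → InCohort T g2 → ¬(g1 = ⊤ ∧ g2 = ⊤) →
    0 < μ {ω | G1 ω = g1 ∧ G2 ω = g2} →
    0 < μ {ω | G1 ω = ⊤ ∧ G2 ω = ⊤} →
    ∀ t : ℕ, min g1 g2 ≤ (t : ℕ∞) → t ≤ T →
      ∃ h : (Fin K → ℝ) → ℝ, Measurable h ∧
        (fun ω => h (X ω))
          =ᵐ[μ[|{ω | G1 ω = g1 ∧ G2 ω = g2}]]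
          (μ[|{ω | G1 ω = g1 ∧ G2 ω = g2}])[fun ω => Y t 0 0 ω - Y (t - 1) 0 0 ω | mX X] ∧
        (fun ω => h (X ω))
          =ᵐ[μ[|{ω | G1 ω = ⊤ ∧ G2 ω = ⊤}]]
          (μ[|{ω | G1 ω = ⊤ ∧ G2 ω = ⊤}])[fun ω => Y t 0 0 ω - Y (t - 1) 0 0 ω | mX X]

/-- Conditional parallel trends with respect to the not-yet-treated. -/
def CondPTNyt (μ : Measure Ω) (G1 G2 : Ω → ℕ∞) (Y : ℕ → ℕ∞ → ℕ∞ → Ω → ℝ)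
    (T : ℕ) {K : ℕ} (X : Ω → Fin K → ℝ) : Prop :=
  ∀ g1 g2 : ℕ∞, InCohort T g1 → InCohort T g2 → ¬(g1 = ⊤ ∧ g2 = ⊤) →
    0 < μ {ω | G1 ω = g1 ∧ G2 ω = g2} →
    ∀ s t : ℕ, min g1 g2 ≤ (t : ℕ∞) → t ≤ s → s ≤ T →
      0 < μ {ω | ¬ G1 ω ≤ (s : ℕ∞) ∧ ¬ G2 ω ≤ (s : ℕ∞) ∧ G1 ω ≠ g1 ∧ G2 ω ≠ g2} →
      ∃ h : (Fin K → ℝ) → ℝ, Measurable h ∧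
        (fun ω => h (X ω))
          =ᵐ[μ[|{ω | G1 ω = g1 ∧ G2 ω = g2}]]
          (μ[|{ω | G1 ω = g1 ∧ G2 ω = g2}])[fun ω => Y t 0 0 ω - Y (t - 1) 0 0 ω | mX X] ∧
        (fun ω => h (X ω))
          =ᵐ[μ[|{ω | ¬ G1 ω ≤ (s : ℕ∞) ∧ ¬ G2 ω ≤ (s : ℕ∞) ∧ G1 ω ≠ g1 ∧ G2 ω ≠ g2}]]
          (μ[|{ω | ¬ G1 ω ≤ (s : ℕ∞) ∧ ¬ G2 ω ≤ (s : ℕ∞) ∧ G1 ω ≠ g1 ∧ G2 ω ≠ g2}])[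
            fun ω => Y t 0 0 ω - Y (t - 1) 0 0 ω | mX X]


/-- The event `{W = 1} = {G ≠ g} ∪ {G¹=g¹, G²=g²}` selecting the cohort of interest. -/
def Wset (G1 G2 : Ω → ℕ∞) (g1 g2 : ℕ∞) (g : ℕ) : Set Ω :=
  {ω | min (G1 ω) (G2 ω) ≠ (g : ℕ∞) ∨ (G1 ω = g1 ∧ G2 ω = g2)}

/-- Two-event propensity-score conditioning event
`A = {G¹=g¹, G²=g²} ∪ ({D_t=0} ∩ {G¹=g¹, G²=g²}ᶜ)`. -/
def evA (G1 G2 : Ω → ℕ∞) (g1 g2 : ℕ∞) (t : ℕ) : Set Ω :=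
  {ω | (G1 ω = g1 ∧ G2 ω = g2) ∨
    (¬ min (G1 ω) (G2 ω) ≤ (t : ℕ∞) ∧ ¬(G1 ω = g1 ∧ G2 ω = g2))}

/-- Combined-event propensity-score conditioning event
`A^CS = {G=g} ∪ ({D_t=0} ∩ {G≠g})`. -/
def evACS (G1 G2 : Ω → ℕ∞) (g : ℕ) (t : ℕ) : Set Ω :=
  {ω | min (G1 ω) (G2 ω) = (g : ℕ∞) ∨
    (¬ min (G1 ω) (G2 ω) ≤ (t : ℕ∞) ∧ min (G1 ω) (G2 ω) ≠ (g : ℕ∞))}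

/-- The comparison-group event `{D_t = 0} ∩ {(G¹,G²) ≠ (g¹,g²)}` for the two events. -/
def evComp (G1 G2 : Ω → ℕ∞) (g1 g2 : ℕ∞) (t : ℕ) : Set Ω :=
  {ω | ¬ min (G1 ω) (G2 ω) ≤ (t : ℕ∞) ∧ ¬(G1 ω = g1 ∧ G2 ω = g2)}

/-- The comparison-group event `{D_t = 0} ∩ {G ≠ g}` for the combined event. -/
def evCompCS (G1 G2 : Ω → ℕ∞) (g : ℕ) (t : ℕ) : Set Ω :=
  {ω | ¬ min (G1 ω) (G2 ω) ≤ (t : ℕ∞) ∧ min (G1 ω) (G2 ω) ≠ (g : ℕ∞)}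

/-- Inverse-probability weight `h(X)·1_C / (1 − h(X))` built from a propensity score
`h ∘ X` and a comparison event `C`. -/
def ipw {K : ℕ} (X : Ω → Fin K → ℝ) (h : (Fin K → ℝ) → ℝ) (C : Set Ω) : Ω → ℝ :=
  fun ω => h (X ω) * C.indicator (fun _ => (1 : ℝ)) ω / (1 - h (X ω))

end TwoEventDiD

open TwoEventDiD

/-- Lemma 2, unconditional moment equivalence: the unconditional
two-event DiD moment equals the combined-event moment computed under `P(·|W=1)`. -/
theorem unconditional_moment_equivalence
    {Ω : Type*} [MeasurableSpace Ω] (μ : Measure Ω) [IsProbabilityMeasure μ]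
    (T : ℕ) (hT : 2 ≤ T)
    (G1 G2 : Ω → ℕ∞) (Y : ℕ → ℕ∞ → ℕ∞ → Ω → ℝ)
    (hG1mem : ∀ ω, InCohort T (G1 ω)) (hG2mem : ∀ ω, InCohort T (G2 ω))
    (hmG1 : ∀ g : ℕ∞, MeasurableSet {ω | G1 ω = g})
    (hmG2 : ∀ g : ℕ∞, MeasurableSet {ω | G2 ω = g})
    (hYint : ∀ (t : ℕ) (g1 g2 : ℕ∞), Integrable (Y t g1 g2) μ)
    (hYtop1 : ∀ (t : ℕ) (g2 : ℕ∞), Y t ⊤ g2 = Y t 0 g2)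
    (hYtop2 : ∀ (t : ℕ) (g1 : ℕ∞), Y t g1 ⊤ = Y t g1 0)
    (g1 g2 : ℕ∞) (hg1 : InCohort T g1) (hg2 : InCohort T g2)
    (g : ℕ) (hg : (g : ℕ∞) = min g1 g2)
    (t : ℕ) (hgt : g ≤ t) (htT : t ≤ T)
    (hYrt : Integrable (Yr G1 G2 Y t) μ)
    (hYrb : Integrable (Yr G1 G2 Y (g - 1)) μ)
    (hcoh : 0 < μ {ω | G1 ω = g1 ∧ G2 ω = g2})
    (hctrl : 0 < μ {ω | ¬ G1 ω ≤ (t : ℕ∞) ∧ ¬ G2 ω ≤ (t : ℕ∞)})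
    (hW : 0 < μ (Wset G1 G2 g1 g2 g)) :
    cE μ {ω | G1 ω = g1 ∧ G2 ω = g2}
        (fun ω => Yr G1 G2 Y t ω - Yr G1 G2 Y (g - 1) ω)
      - cE μ {ω | ¬ G1 ω ≤ (t : ℕ∞) ∧ ¬ G2 ω ≤ (t : ℕ∞)}
        (fun ω => Yr G1 G2 Y t ω - Yr G1 G2 Y (g - 1) ω)
    = cE (μ[|Wset G1 G2 g1 g2 g]) {ω | min (G1 ω) (G2 ω) = (g : ℕ∞)}
        (fun ω => Yr G1 G2 Y t ω - Yr G1 G2 Y (g - 1) ω)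
      - cE (μ[|Wset G1 G2 g1 g2 g]) {ω | ¬ min (G1 ω) (G2 ω) ≤ (t : ℕ∞)}
        (fun ω => Yr G1 G2 Y t ω - Yr G1 G2 Y (g - 1) ω) := by
  classical
  -- measurability of the relevant events
  have hmS : MeasurableSet {ω | G1 ω = g1 ∧ G2 ω = g2} := (hmG1 g1).inter (hmG2 g2)
  have hmMin : ∀ c : ℕ∞, MeasurableSet {ω | min (G1 ω) (G2 ω) = c} := by
    intro c
    have hset : {ω | min (G1 ω) (G2 ω) = c}
        = ⋃ (a : ℕ∞) (b : ℕ∞) (_ : min a b = c), ({ω | G1 ω = a} ∩ {ω | G2 ω = b}) := by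
      ext ω
      simp only [Set.mem_setOf_eq, Set.mem_iUnion, Set.mem_inter_iff]
      constructor
      · intro h; exact ⟨G1 ω, G2 ω, h, rfl, rfl⟩
      · rintro ⟨a, b, h, ha, hb⟩; rw [ha, hb]; exact h
    rw [hset]
    exact MeasurableSet.iUnion fun a => MeasurableSet.iUnion fun b =>
      MeasurableSet.iUnion fun _ => (hmG1 a).inter (hmG2 b)
  have hmA : MeasurableSet {ω | min (G1 ω) (G2 ω) = (g : ℕ∞)} := hmMin g
  have hmB : MeasurableSet {ω | ¬ min (G1 ω) (G2 ω) ≤ (t : ℕ∞)} := by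
    have hset : {ω | min (G1 ω) (G2 ω) ≤ (t : ℕ∞)}
        = ⋃ (c : ℕ∞) (_ : c ≤ (t : ℕ∞)), {ω | min (G1 ω) (G2 ω) = c} := by
      ext ω
      simp only [Set.mem_setOf_eq, Set.mem_iUnion]
      constructor
      · intro h; exact ⟨min (G1 ω) (G2 ω), h, rfl⟩
      · rintro ⟨c, hc, h⟩; rw [h]; exact hc
    have : MeasurableSet {ω | min (G1 ω) (G2 ω) ≤ (t : ℕ∞)} := by
      rw [hset]
      exact MeasurableSet.iUnion fun c => MeasurableSet.iUnion fun _ => hmMin c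
    exact this.compl
  have hmW : MeasurableSet (Wset G1 G2 g1 g2 g) := by
    have : Wset G1 G2 g1 g2 g
        = {ω | min (G1 ω) (G2 ω) = (g : ℕ∞)}ᶜ ∪ {ω | G1 ω = g1 ∧ G2 ω = g2} := rfl
    rw [this]; exact hmA.compl.union hmS
  -- set identities
  have hSsubA : {ω | G1 ω = g1 ∧ G2 ω = g2} ⊆ {ω | min (G1 ω) (G2 ω) = (g : ℕ∞)} := by
    rintro ω ⟨h1, h2⟩
    simp only [Set.mem_setOf_eq, h1, h2]
    exact hg.symm
  have hAW : Wset G1 G2 g1 g2 g ∩ {ω | min (G1 ω) (G2 ω) = (g : ℕ∞)}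
      = {ω | G1 ω = g1 ∧ G2 ω = g2} := by
    ext ω
    simp only [Wset, Set.mem_inter_iff, Set.mem_setOf_eq]
    constructor
    · rintro ⟨hw | hw, hA⟩
      · exact absurd hA hw
      · exact hw
    · intro h; exact ⟨Or.inr h, hSsubA h⟩
  have hBW : Wset G1 G2 g1 g2 g ∩ {ω | ¬ min (G1 ω) (G2 ω) ≤ (t : ℕ∞)}
      = {ω | ¬ min (G1 ω) (G2 ω) ≤ (t : ℕ∞)} := by
    apply Set.inter_eq_self_of_subset_right
    intro ω hω
    left
    intro hmin
    apply hω
    rw [hmin]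
    exact_mod_cast hgt
  have hBeq : {ω | ¬ G1 ω ≤ (t : ℕ∞) ∧ ¬ G2 ω ≤ (t : ℕ∞)}
      = {ω | ¬ min (G1 ω) (G2 ω) ≤ (t : ℕ∞)} := by
    ext ω
    simp only [Set.mem_setOf_eq, min_le_iff, not_or]
  -- rewrite the conditional measures
  have h1 : (μ[|Wset G1 G2 g1 g2 g])[|{ω | min (G1 ω) (G2 ω) = (g : ℕ∞)}]
      = μ[|{ω | G1 ω = g1 ∧ G2 ω = g2}] := by
    rw [ProbabilityTheory.cond_cond_eq_cond_inter hmW hmA, hAW]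
  have h2 : (μ[|Wset G1 G2 g1 g2 g])[|{ω | ¬ min (G1 ω) (G2 ω) ≤ (t : ℕ∞)}]
      = μ[|{ω | ¬ min (G1 ω) (G2 ω) ≤ (t : ℕ∞)}] := by
    rw [ProbabilityTheory.cond_cond_eq_cond_inter hmW hmB, hBW]
  simp only [cE, h1, h2, hBeq]
end
end

section
/- Let g¹, g² ∈ {2,…,T} ∪ {∞} with g := min(g¹,g²) finite, and let t with g ≤ t ≤ T. Assume P(W=1) > 0, P(G¹=g¹,G²=g²) > 0, p(X) < 1 and p^CS(X) < 1 almost surely, E[w] > 0 and E_{P_W}[w^CS] > 0. Then the inverse-probability-weighting two-event moment equals the combined-event IPW moment under P_W: E[(1{G¹=g¹,G²=g²}/E[1{G¹=g¹,G²=g²}] − w/E[w])·(Y_t − Y_{g−1})] = E_{P_W}[(1{G=g}/E_{P_W}[1{G=g}] − w^CS/E_{P_W}[w^CS])·(Y_t − Y_{g−1})]. -/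
/- Two-event staggered Difference-in-Differences setup (Callaway–Sant'Anna with a
confounding event).  Cohorts take values in `{2,…,T} ∪ {∞} ⊆ ℕ∞`; the potential-outcome
index `0 : ℕ∞` codes "never treated by that event". -/

open MeasureTheory ProbabilityTheory

noncomputable section

open TwoEventDiD

/-- Lemma 2, IPW moment equivalence: the two-event
inverse-probability-weighting moment equals the combined-event IPW moment under
`P(·|W=1)`. -/
theorem ipw_moment_equivalence
    {Ω : Type*} [MeasurableSpace Ω] (μ : Measure Ω) [IsProbabilityMeasure μ]
    (T : ℕ) (hT : 2 ≤ T)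
    (G1 G2 : Ω → ℕ∞) (Y : ℕ → ℕ∞ → ℕ∞ → Ω → ℝ)
    (hG1mem : ∀ ω, InCohort T (G1 ω)) (hG2mem : ∀ ω, InCohort T (G2 ω))
    (hmG1 : ∀ g : ℕ∞, MeasurableSet {ω | G1 ω = g})
    (hmG2 : ∀ g : ℕ∞, MeasurableSet {ω | G2 ω = g})
    (hYint : ∀ (t : ℕ) (g1 g2 : ℕ∞), Integrable (Y t g1 g2) μ)
    (hYtop1 : ∀ (t : ℕ) (g2 : ℕ∞), Y t ⊤ g2 = Y t 0 g2)
    (hYtop2 : ∀ (t : ℕ) (g1 : ℕ∞), Y t g1 ⊤ = Y t g1 0)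
    {K : ℕ} (X : Ω → Fin K → ℝ) (hX : Measurable X)
    (g1 g2 : ℕ∞) (hg1 : InCohort T g1) (hg2 : InCohort T g2)
    (g : ℕ) (hg : (g : ℕ∞) = min g1 g2)
    (t : ℕ) (hgt : g ≤ t) (htT : t ≤ T)
    (hW : 0 < μ (Wset G1 G2 g1 g2 g))
    (hYrt : Integrable (Yr G1 G2 Y t) μ)
    (hYrb : Integrable (Yr G1 G2 Y (g - 1)) μ)
    (hcoh : 0 < μ {ω | G1 ω = g1 ∧ G2 ω = g2})
    -- chosen versions of the two propensity scores
    (hp hpCS : (Fin K → ℝ) → ℝ) (hpm : Measurable hp) (hpCSm : Measurable hpCS)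
    (hpver : (fun ω => hp (X ω))
      =ᵐ[μ[|evA G1 G2 g1 g2 t]]
      (μ[|evA G1 G2 g1 g2 t])[
        Set.indicator {ω | G1 ω = g1 ∧ G2 ω = g2} (fun _ => (1 : ℝ)) | mX X])
    (hpCSver : (fun ω => hpCS (X ω))
      =ᵐ[(μ[|Wset G1 G2 g1 g2 g])[|evACS G1 G2 g t]]
      ((μ[|Wset G1 G2 g1 g2 g])[|evACS G1 G2 g t])[
        Set.indicator {ω | min (G1 ω) (G2 ω) = (g : ℕ∞)} (fun _ => (1 : ℝ)) | mX X])
    -- `p(X) < 1` and `p^CS(X) < 1` almost surely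
    (hlt : ∀ᵐ ω ∂μ, hp (X ω) < 1) (hltCS : ∀ᵐ ω ∂μ, hpCS (X ω) < 1)
    -- `E[w] > 0` and `E_{P_W}[w^CS] > 0`
    (hEw : 0 < ∫ ω, ipw X hp (evComp G1 G2 g1 g2 t) ω ∂μ)
    (hEwCS : 0 < ∫ ω, ipw X hpCS (evCompCS G1 G2 g t) ω ∂(μ[|Wset G1 G2 g1 g2 g]))
    :
    ∫ ω, (Set.indicator {ω' | G1 ω' = g1 ∧ G2 ω' = g2} (fun _ => (1 : ℝ)) ω
            / (∫ ω', Set.indicator {ω'' | G1 ω'' = g1 ∧ G2 ω'' = g2} (fun _ => (1 : ℝ)) ω' ∂μ)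
          - ipw X hp (evComp G1 G2 g1 g2 t) ω
            / (∫ ω', ipw X hp (evComp G1 G2 g1 g2 t) ω' ∂μ))
        * (Yr G1 G2 Y t ω - Yr G1 G2 Y (g - 1) ω) ∂μ
    = ∫ ω, (Set.indicator {ω' | min (G1 ω') (G2 ω') = (g : ℕ∞)} (fun _ => (1 : ℝ)) ω
            / (∫ ω', Set.indicator {ω'' | min (G1 ω'') (G2 ω'') = (g : ℕ∞)} (fun _ => (1 : ℝ)) ω'
                ∂(μ[|Wset G1 G2 g1 g2 g]))
          - ipw X hpCS (evCompCS G1 G2 g t) ω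
            / (∫ ω', ipw X hpCS (evCompCS G1 G2 g t) ω' ∂(μ[|Wset G1 G2 g1 g2 g])))
        * (Yr G1 G2 Y t ω - Yr G1 G2 Y (g - 1) ω) ∂(μ[|Wset G1 G2 g1 g2 g]) := by
  classical
  have hG1 : Measurable G1 := measurable_to_countable' hmG1
  have hG2 : Measurable G2 := measurable_to_countable' hmG2
  have key : ∀ s : Set (ℕ∞ × ℕ∞), MeasurableSet {ω | (G1 ω, G2 ω) ∈ s} :=
    fun s => (hG1.prodMk hG2) ((Set.to_countable s).measurableSet)
  set A : Set Ω := {ω | G1 ω = g1 ∧ G2 ω = g2} with hAdef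
  set Ag : Set Ω := {ω | min (G1 ω) (G2 ω) = (g : ℕ∞)} with hAgdef
  set W : Set Ω := Wset G1 G2 g1 g2 g with hWdef
  set D : Set Ω := {ω | ¬ min (G1 ω) (G2 ω) ≤ (t : ℕ∞)} with hDdef
  have hWmem : ∀ ω, ω ∈ W ↔
      (min (G1 ω) (G2 ω) ≠ (g : ℕ∞) ∨ (G1 ω = g1 ∧ G2 ω = g2)) := fun ω => Iff.rfl
  have hAmem : ∀ ω, ω ∈ A ↔ (G1 ω = g1 ∧ G2 ω = g2) := fun ω => Iff.rfl
  have hAgmem : ∀ ω, ω ∈ Ag ↔ min (G1 ω) (G2 ω) = (g : ℕ∞) := fun ω => Iff.rfl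
  have hDmem : ∀ ω, ω ∈ D ↔ ¬ min (G1 ω) (G2 ω) ≤ (t : ℕ∞) := fun ω => Iff.rfl
  have hgle : (g : ℕ∞) ≤ (t : ℕ∞) := by exact_mod_cast hgt
  have f1 : ∀ ω, ω ∈ A → min (G1 ω) (G2 ω) = (g : ℕ∞) := by
    intro ω hω
    rw [hω.1, hω.2, ← hg]
  have f2 : ∀ ω, min (G1 ω) (G2 ω) = (g : ℕ∞) → min (G1 ω) (G2 ω) ≤ (t : ℕ∞) := by
    intro ω hω; rw [hω]; exact hgle
  -- the two comparison events coincide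
  have hCeq1 : evComp G1 G2 g1 g2 t = D := by
    ext ω
    simp only [evComp, hDdef, Set.mem_setOf_eq]
    constructor
    · exact fun h => h.1
    · intro h
      exact ⟨h, fun hA => h (f2 ω (f1 ω hA))⟩
  have hCeq2 : evCompCS G1 G2 g t = D := by
    ext ω
    simp only [evCompCS, hDdef, Set.mem_setOf_eq]
    constructor
    · exact fun h => h.1
    · intro h
      exact ⟨h, fun he => h (f2 ω he)⟩
  -- inclusions into W
  have hAW : A ⊆ W := fun ω hω => Or.inr hω
  have hDW : D ⊆ W := fun ω hω => Or.inl (fun he => hω (f2 ω he))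
  have hAgW : ∀ ω ∈ W, (ω ∈ Ag ↔ ω ∈ A) := by
    intro ω hω
    constructor
    · intro hg'
      rcases (hWmem ω).mp hω with h | h
      · exact absurd hg' h
      · exact h
    · exact f1 ω
  -- measurability of events
  have mW : MeasurableSet W := key {p | min p.1 p.2 ≠ (g : ℕ∞) ∨ (p.1 = g1 ∧ p.2 = g2)}
  have mevA : MeasurableSet (evA G1 G2 g1 g2 t) :=
    key {p | (p.1 = g1 ∧ p.2 = g2) ∨ (¬ min p.1 p.2 ≤ (t : ℕ∞) ∧ ¬ (p.1 = g1 ∧ p.2 = g2))}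
  have mevACS : MeasurableSet (evACS G1 G2 g t) :=
    key {p | min p.1 p.2 = (g : ℕ∞) ∨ (¬ min p.1 p.2 ≤ (t : ℕ∞) ∧ min p.1 p.2 ≠ (g : ℕ∞))}
  -- W ∩ evACS = evA
  have hWA : W ∩ evACS G1 G2 g t = evA G1 G2 g1 g2 t := by
    ext ω
    simp only [hWdef, Wset, evACS, evA, Set.mem_inter_iff, Set.mem_setOf_eq]
    have h1 := f1 ω
    have h2 := f2 ω
    simp only [hAmem] at h1
    constructor
    · rintro ⟨hW', hACS⟩
      rcases hACS with hmg | ⟨hnt, hne⟩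
      · rcases hW' with hne | htr
        · exact absurd hmg hne
        · exact Or.inl htr
      · exact Or.inr ⟨hnt, fun htr => hne (h1 htr)⟩
    · rintro (htr | ⟨hnt, hntr⟩)
      · exact ⟨Or.inr htr, Or.inl (h1 htr)⟩
      · have hne : min (G1 ω) (G2 ω) ≠ (g : ℕ∞) := fun he => hnt (h2 he)
        exact ⟨Or.inl hne, Or.inr ⟨hnt, hne⟩⟩
  have hDevA : D ⊆ evA G1 G2 g1 g2 t := fun ω hω =>
    Or.inr ⟨hω, fun htr => hω (f2 ω (f1 ω htr))⟩
  -- the two conditioning measures coincide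
  have hcondEq : (μ[|W])[|evACS G1 G2 g t] = μ[|evA G1 G2 g1 g2 t] := by
    rw [cond_cond_eq_cond_inter mW mevACS, hWA]
  set ν : Measure Ω := μ[|evA G1 G2 g1 g2 t] with hνdef
  have hνae : ∀ᵐ ω ∂ν, ω ∈ evA G1 G2 g1 g2 t := by
    rw [hνdef, ProbabilityTheory.cond]
    exact Measure.ae_smul_measure (ae_restrict_mem mevA) _
  -- indicators agree ν-a.e.
  have hind : (Set.indicator Ag (fun _ => (1 : ℝ)))
      =ᵐ[ν] (Set.indicator A (fun _ => (1 : ℝ))) := by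
    filter_upwards [hνae] with ω hω
    have hiff : ω ∈ Ag ↔ ω ∈ A := by
      rcases hω with htr | ⟨hnt, hntr⟩
      · exact ⟨fun _ => htr, f1 ω⟩
      · exact ⟨fun he => absurd (f2 ω he) hnt, fun htr => absurd htr hntr⟩
    by_cases h : ω ∈ A
    · rw [Set.indicator_of_mem (hiff.mpr h), Set.indicator_of_mem h]
    · rw [Set.indicator_of_notMem (fun h' => h (hiff.mp h')),
        Set.indicator_of_notMem h]
  -- the two propensity scores agree ν-a.e.
  have hhp : (fun ω => hp (X ω)) =ᵐ[ν] (fun ω => hpCS (X ω)) := by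
    rw [hcondEq] at hpCSver
    exact hpver.trans ((condExp_congr_ae hind).symm.trans hpCSver.symm)
  -- transfer to μ-a.e. on evA
  have hac : μ.restrict (evA G1 G2 g1 g2 t) ≪ ν := by
    intro N hN
    rw [hνdef, ProbabilityTheory.cond, Measure.smul_apply, smul_eq_mul] at hN
    rcases mul_eq_zero.mp hN with h | h
    · exact absurd (ENNReal.inv_eq_zero.mp h) (measure_ne_top μ _)
    · exact h
  have hhpμ : ∀ᵐ ω ∂μ, ω ∈ evA G1 G2 g1 g2 t → hp (X ω) = hpCS (X ω) :=
    (ae_restrict_iff' mevA).mp (hhp.filter_mono hac.ae_le)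
  -- the ipw weights agree μ-a.e.
  have hwEq : (ipw X hp D) =ᵐ[μ] (ipw X hpCS D) := by
    filter_upwards [hhpμ] with ω hω
    unfold ipw
    by_cases hωD : ω ∈ D
    · rw [hω (hDevA hωD)]
    · simp [Set.indicator_of_notMem hωD]
  rw [hCeq1, hCeq2]
  -- normalizing constant
  set c : ℝ := (μ W).toReal with hcdef
  have hc0 : 0 < c := ENNReal.toReal_pos (ne_of_gt hW) (measure_ne_top μ W)
  have hcne : c ≠ 0 := ne_of_gt hc0
  have htrans : ∀ F : Ω → ℝ,
      ∫ ω, F ω ∂(μ[|W]) = c⁻¹ * ∫ ω in W, F ω ∂μ := by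
    intro F
    rw [show μ[|W] = (μ W)⁻¹ • μ.restrict W from rfl, integral_smul_measure,
      ENNReal.toReal_inv, smul_eq_mul, hcdef]
  -- vanishing off W
  have hAnotW : ∀ ω, ω ∉ W → Set.indicator A (fun _ => (1 : ℝ)) ω = 0 :=
    fun ω hω => Set.indicator_of_notMem (fun h => hω (hAW h)) _
  have hipwnotW : ∀ h' : (Fin K → ℝ) → ℝ, ∀ ω, ω ∉ W → ipw X h' D ω = 0 := by
    intro h' ω hω
    unfold ipw
    rw [Set.indicator_of_notMem (fun h => hω (hDW h))]
    simp
  have hindOn : Set.EqOn (Set.indicator Ag (fun _ => (1 : ℝ)))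
      (Set.indicator A (fun _ => (1 : ℝ))) W := by
    intro ω hω
    by_cases h : ω ∈ A
    · rw [Set.indicator_of_mem ((hAgW ω hω).mpr h), Set.indicator_of_mem h]
    · rw [Set.indicator_of_notMem (fun h' => h ((hAgW ω hω).mp h')),
        Set.indicator_of_notMem h]
  -- denominators
  have ha' : ∫ ω, Set.indicator Ag (fun _ => (1 : ℝ)) ω ∂(μ[|W])
      = c⁻¹ * ∫ ω, Set.indicator A (fun _ => (1 : ℝ)) ω ∂μ := by
    rw [htrans]
    congr 1
    rw [setIntegral_congr_fun mW hindOn,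
      setIntegral_eq_integral_of_forall_compl_eq_zero hAnotW]
  have hb' : ∫ ω, ipw X hpCS D ω ∂(μ[|W]) = c⁻¹ * ∫ ω, ipw X hp D ω ∂μ := by
    rw [htrans]
    congr 1
    rw [integral_congr_ae (ae_restrict_of_ae hwEq.symm),
      setIntegral_eq_integral_of_forall_compl_eq_zero (hipwnotW hp)]
  have keydiv : ∀ x y : ℝ, x / (c⁻¹ * y) = c * (x / y) := by
    intro x y
    rw [div_eq_mul_inv, mul_inv, inv_inv, div_eq_mul_inv]
    ring
  rw [htrans, ha', hb']
  set a : ℝ := ∫ ω, Set.indicator A (fun _ => (1 : ℝ)) ω ∂μ with hadef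
  set b : ℝ := ∫ ω, ipw X hp D ω ∂μ with hbdef
  have hintEq : ∫ ω in W,
      (Set.indicator Ag (fun _ => (1 : ℝ)) ω / (c⁻¹ * a)
        - ipw X hpCS D ω / (c⁻¹ * b)) * (Yr G1 G2 Y t ω - Yr G1 G2 Y (g - 1) ω) ∂μ
      = ∫ ω in W, c * ((Set.indicator A (fun _ => (1 : ℝ)) ω / a
        - ipw X hp D ω / b) * (Yr G1 G2 Y t ω - Yr G1 G2 Y (g - 1) ω)) ∂μ := by
    apply integral_congr_ae
    filter_upwards [ae_restrict_mem mW, ae_restrict_of_ae hwEq] with ω hωW hωw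
    rw [hindOn hωW, ← hωw, keydiv, keydiv]
    ring
  rw [hintEq, integral_const_mul,
    setIntegral_eq_integral_of_forall_compl_eq_zero
      (f := fun ω => (Set.indicator A (fun _ => (1 : ℝ)) ω / a
        - ipw X hp D ω / b) * (Yr G1 G2 Y t ω - Yr G1 G2 Y (g - 1) ω))
      (fun ω hω => by simp [hAnotW ω hω, hipwnotW hp ω hω]),
    inv_mul_cancel_left₀ hcne]
end
end

section
/- Let g¹, g² ∈ {2,…,T} ∪ {∞} with g := min(g¹,g²) finite, and let t with g ≤ t ≤ T. Assume P(W=1) > 0, P(G¹=g¹,G²=g²) > 0, P(D_t=0, G¹≠g¹, G²≠g²) > 0, p(X) < 1 and p^CS(X) < 1 almost surely, E[w] > 0 and E_{P_W}[w^CS] > 0. Then the doubly-robust two-event moment equals the combined-event doubly-robust moment under P_W: E[(1{G¹=g¹,G²=g²}/E[1{G¹=g¹,G²=g²}] − w/E[w])·(Y_t − Y_{g−1} − m(X))] = E_{P_W}[(1{G=g}/E_{P_W}[1{G=g}] − w^CS/E_{P_W}[w^CS])·(Y_t − Y_{g−1} − m^CS(X))]. -/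
/- Two-event staggered Difference-in-Differences setup (Callaway–Sant'Anna with a
confounding event).  Cohorts take values in `{2,…,T} ∪ {∞} ⊆ ℕ∞`; the potential-outcome
index `0 : ℕ∞` codes "never treated by that event". -/

open MeasureTheory ProbabilityTheory

noncomputable section

open TwoEventDiD

/-!
On `W = {G ≠ g} ∪ {G¹ = g¹, G² = g²}` the combined event `G = g` is exactly the cohort
`(g¹, g²)`, and since `g ≤ t` the not-yet-treated groups `{D_t = 0} ∩ {G ≠ g}` and
`{D_t = 0} ∩ {(G¹, G²) ≠ (g¹, g²)}` coincide. Hence conditioning on `W` and then on the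
combined-event conditioning sets is the same as conditioning on the two-event ones, so the
propensity scores agree a.e. on the cohort and comparison group, and the outcome regressions
agree a.e. on the comparison group. By overlap (`p(X) < 1`), a `σ(X)`-measurable discrepancy
that is invisible on the comparison group is also invisible on the cohort, so the outcome
regressions agree wherever the moment's weights are nonzero. Finally the normalized moment
is invariant under rescaling the measure, which removes the conditioning on `W`.
-/

section DoublyRobust

variable {Ω : Type*} [MeasurableSpace Ω] {μ : Measure Ω}

lemma measurableSet_setOf_of_countable {α β : Type*} [Countable α] [Countable β]
    {f : Ω → α} {h : Ω → β} (hf : ∀ a, MeasurableSet {ω | f ω = a})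
    (hh : ∀ b, MeasurableSet {ω | h ω = b}) (q : α → β → Prop) :
    MeasurableSet {ω | q (f ω) (h ω)} := by
  have hU : {ω | q (f ω) (h ω)} = ⋃ (a) (b) (_ : q a b), {ω | f ω = a} ∩ {ω | h ω = b} := by
    ext ω
    simp only [Set.mem_ofPred_eq, Set.mem_iUnion, Set.mem_inter_iff]
    exact ⟨fun hq => ⟨f ω, h ω, hq, rfl, rfl⟩, fun ⟨a, b, hab, ha, hb⟩ => ha ▸ hb ▸ hab⟩
  rw [hU]
  exact .iUnion fun a => .iUnion fun b => .iUnion fun _ => (hf a).inter (hh b)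

lemma ae_cond_iff [IsFiniteMeasure μ] {s : Set Ω} (hs : MeasurableSet s) {p : Ω → Prop} :
    (∀ᵐ ω ∂μ[|s], p ω) ↔ ∀ᵐ ω ∂μ, ω ∈ s → p ω := by
  rw [ProbabilityTheory.cond,
    Measure.ae_ennreal_smul_measure_iff (ENNReal.inv_ne_zero.mpr (measure_ne_top μ s)),
    ae_restrict_iff' hs]

lemma indicator_ae_eq_cond_of_inter_eq {s B B' : Set Ω} (hs : MeasurableSet s)
    (h : s ∩ B = s ∩ B') (f : Ω → ℝ) : B.indicator f =ᵐ[μ[|s]] B'.indicator f := by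
  filter_upwards [ae_cond_mem hs] with ω hω
  have hB : ω ∈ B ↔ ω ∈ B' := by
    simpa [hω] using Set.ext_iff.mp h ω
  by_cases hb : ω ∈ B
  · rw [Set.indicator_of_mem hb, Set.indicator_of_mem (hB.mp hb)]
  · rw [Set.indicator_of_notMem hb, Set.indicator_of_notMem (mt hB.mpr hb)]

lemma integral_cond_of_forall_notMem_eq_zero {s : Set Ω} {f : Ω → ℝ}
    (hf : ∀ ω ∉ s, f ω = 0) : ∫ ω, f ω ∂μ[|s] = (μ.real s)⁻¹ * ∫ ω, f ω ∂μ := by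
  rw [ProbabilityTheory.cond, integral_smul_measure,
    setIntegral_eq_integral_of_forall_compl_eq_zero hf, ENNReal.toReal_inv, smul_eq_mul,
    measureReal_def]

/-- `D` is the treated-cohort indicator, `w` the comparison weights, `Δ` the outcome change
`Y_t - Y_{g-1}` and `m` the outcome regression. -/
def drMoment (μ : Measure Ω) (D w Δ m : Ω → ℝ) : ℝ :=
  ∫ ω, (D ω / ∫ ω', D ω' ∂μ - w ω / ∫ ω', w ω' ∂μ) * (Δ ω - m ω) ∂μ

lemma drMoment_cond [IsFiniteMeasure μ] {s : Set Ω} (hμs : μ s ≠ 0)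
    {D w Δ m : Ω → ℝ} (hD : ∀ ω ∉ s, D ω = 0) (hw : ∀ ω ∉ s, w ω = 0) :
    drMoment (μ[|s]) D w Δ m = drMoment μ D w Δ m := by
  have hc : μ.real s ≠ 0 := (measureReal_ne_zero_iff (measure_ne_top μ s)).mpr hμs
  have hscale : ∀ x y : ℝ, x / ((μ.real s)⁻¹ * y) = μ.real s * (x / y) := fun x y => by
    rw [div_mul_eq_div_div_swap, div_inv_eq_mul, mul_comm]
  unfold drMoment
  rw [integral_cond_of_forall_notMem_eq_zero hD, integral_cond_of_forall_notMem_eq_zero hw,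
    integral_cond_of_forall_notMem_eq_zero (fun ω hω => by simp [hD ω hω, hw ω hω]),
    ← integral_const_mul]
  congr 1 with ω
  rw [hscale, hscale, ← mul_sub, ← mul_assoc, ← mul_assoc, inv_mul_cancel₀ hc, one_mul]

lemma drMoment_congr_ae {D D' w w' Δ m : Ω → ℝ} (hD : D =ᵐ[μ] D') (hw : w =ᵐ[μ] w') :
    drMoment μ D w Δ m = drMoment μ D' w' Δ m := by
  unfold drMoment
  rw [integral_congr_ae hD, integral_congr_ae hw]
  refine integral_congr_ae ?_
  filter_upwards [hD, hw] with ω hDω hwω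
  rw [hDω, hwω]

lemma drMoment_congr_of_ae_eq_on {s : Set Ω} {D w Δ m m' : Ω → ℝ} (hD : ∀ ω ∉ s, D ω = 0)
    (hw : ∀ ω ∉ s, w ω = 0) (hm : ∀ᵐ ω ∂μ, ω ∈ s → m ω = m' ω) :
    drMoment μ D w Δ m = drMoment μ D w Δ m' := by
  unfold drMoment
  refine integral_congr_ae ?_
  filter_upwards [hm] with ω hω
  by_cases hs : ω ∈ s
  · rw [hω hs]
  · simp [hD ω hs, hw ω hs]

end DoublyRobust

section Overlap

variable {Ω : Type*} {m m₀ : MeasurableSpace Ω}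

lemma measure_eq_zero_of_ae_subset_of_condExp_lt_one {ν : Measure[m₀] Ω} [IsFiniteMeasure ν]
    (hm : m ≤ m₀) {A N : Set Ω} (hA : MeasurableSet[m₀] A) (hN : MeasurableSet[m] N)
    (hlt : ∀ᵐ ω ∂ν, ν[A.indicator (fun _ => (1 : ℝ)) | m] ω < 1)
    (hNA : ∀ᵐ ω ∂ν, ω ∈ N → ω ∈ A) : ν N = 0 := by
  set p := ν[A.indicator (fun _ => (1 : ℝ)) | m]
  have hNA' : (N ∩ A : Set Ω) =ᵐ[ν] N := by
    filter_upwards [hNA] with ω h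
    exact propext ⟨fun h' => h'.1, fun h' => ⟨h', h h'⟩⟩
  have hzero : ∫ ω in N, (1 - p ω) ∂ν = 0 := by
    rw [integral_sub (integrable_const 1).integrableOn integrable_condExp.integrableOn,
      setIntegral_condExp hm ((integrable_const 1).indicator hA) hN, setIntegral_indicator hA,
      setIntegral_const, setIntegral_const, measureReal_congr hNA', sub_self]
  have hpos : ∀ᵐ ω ∂ν.restrict N, 0 < 1 - p ω :=
    ae_restrict_of_ae (hlt.mono fun ω h => sub_pos.mpr h)
  have hvanish : (fun ω => 1 - p ω) =ᵐ[ν.restrict N] 0 :=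
    (setIntegral_eq_zero_iff_of_nonneg_ae (hpos.mono fun ω h => h.le)
      ((integrable_const 1).sub integrable_condExp).integrableOn).mp hzero
  have hfalse : ∀ᵐ _ω ∂ν.restrict N, False := by
    filter_upwards [hvanish, hpos] with ω h0 h
    exact h.ne' h0
  simpa using ae_iff.mp hfalse

lemma ae_imp_of_ae_imp_of_condExp_lt_one {μ : Measure[m₀] Ω} [IsFiniteMeasure μ]
    (hm : m ≤ m₀) {A C : Set Ω} (hA : MeasurableSet[m₀] A) (hC : MeasurableSet[m₀] C)
    {q : Ω → Prop} (hq : MeasurableSet[m] {ω | q ω}) {p : Ω → ℝ}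
    (hp : p =ᵐ[μ[|A ∪ C]] (μ[|A ∪ C])[A.indicator (fun _ => (1 : ℝ)) | m])
    (hlt : ∀ᵐ ω ∂μ, p ω < 1) (hqC : ∀ᵐ ω ∂μ, ω ∈ C → q ω) :
    ∀ᵐ ω ∂μ, ω ∈ A ∪ C → q ω := by
  rw [← ae_cond_iff (hA.union hC)]
  have hlt' : ∀ᵐ ω ∂μ[|A ∪ C], (μ[|A ∪ C])[A.indicator (fun _ => (1 : ℝ)) | m] ω < 1 := by
    filter_upwards [hp, cond_absolutelyContinuous.ae_le hlt] with ω hpω hltω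
    rwa [← hpω]
  have hnull := measure_eq_zero_of_ae_subset_of_condExp_lt_one hm hA hq.compl hlt' <| by
    rw [ae_cond_iff (hA.union hC)]
    filter_upwards [hqC] with ω hω hAC hnq
    exact hAC.resolve_right fun hωC => hnq (hω hωC)
  filter_upwards [measure_eq_zero_iff_ae_notMem.mp hnull] with ω hω
  simpa using hω

end Overlap

namespace TwoEventDiD

variable {Ω : Type*} {G1 G2 : Ω → ℕ∞} {g1 g2 : ℕ∞} {g t : ℕ}

lemma min_eq_of_cohort (hg : (g : ℕ∞) = min g1 g2) {ω : Ω} :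
    G1 ω = g1 ∧ G2 ω = g2 → min (G1 ω) (G2 ω) = g :=
  fun ⟨h1, h2⟩ => by rw [h1, h2, hg]

lemma ne_of_not_le_of_le (hgt : g ≤ t) {a : ℕ∞} (ha : ¬ a ≤ t) : a ≠ g :=
  fun he => ha (he ▸ Nat.cast_le.mpr hgt)

lemma cohort_subset_Wset : {ω | G1 ω = g1 ∧ G2 ω = g2} ⊆ Wset G1 G2 g1 g2 g :=
  fun _ => Or.inr

lemma evComp_subset_Wset (hgt : g ≤ t) : evComp G1 G2 g1 g2 t ⊆ Wset G1 G2 g1 g2 g :=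
  fun _ hω => Or.inl (ne_of_not_le_of_le hgt hω.1)

lemma evComp_eq_evCompCS (hg : (g : ℕ∞) = min g1 g2) (hgt : g ≤ t) :
    evComp G1 G2 g1 g2 t = evCompCS G1 G2 g t := by
  ext ω
  have hcoh : G1 ω = g1 ∧ G2 ω = g2 → min (G1 ω) (G2 ω) = g := min_eq_of_cohort hg
  have hnyt : ¬ min (G1 ω) (G2 ω) ≤ t → min (G1 ω) (G2 ω) ≠ g := ne_of_not_le_of_le hgt
  simp only [evComp, evCompCS, Set.mem_ofPred_eq]
  tauto

lemma Wset_inter_min_eq (hg : (g : ℕ∞) = min g1 g2) :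
    Wset G1 G2 g1 g2 g ∩ {ω | min (G1 ω) (G2 ω) = g}
      = Wset G1 G2 g1 g2 g ∩ {ω | G1 ω = g1 ∧ G2 ω = g2} := by
  ext ω
  have hcoh : G1 ω = g1 ∧ G2 ω = g2 → min (G1 ω) (G2 ω) = g := min_eq_of_cohort hg
  simp only [Wset, Set.mem_inter_iff, Set.mem_ofPred_eq]
  tauto

lemma evA_inter_min_eq (hg : (g : ℕ∞) = min g1 g2) (hgt : g ≤ t) :
    evA G1 G2 g1 g2 t ∩ {ω | min (G1 ω) (G2 ω) = g}
      = evA G1 G2 g1 g2 t ∩ {ω | G1 ω = g1 ∧ G2 ω = g2} := by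
  ext ω
  have hcoh : G1 ω = g1 ∧ G2 ω = g2 → min (G1 ω) (G2 ω) = g := min_eq_of_cohort hg
  have hnyt : ¬ min (G1 ω) (G2 ω) ≤ t → min (G1 ω) (G2 ω) ≠ g := ne_of_not_le_of_le hgt
  simp only [evA, Set.mem_inter_iff, Set.mem_ofPred_eq]
  tauto

lemma Wset_inter_evACS (hg : (g : ℕ∞) = min g1 g2) (hgt : g ≤ t) :
    Wset G1 G2 g1 g2 g ∩ evACS G1 G2 g t = evA G1 G2 g1 g2 t := by
  ext ω
  have hcoh : G1 ω = g1 ∧ G2 ω = g2 → min (G1 ω) (G2 ω) = g := min_eq_of_cohort hg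
  have hnyt : ¬ min (G1 ω) (G2 ω) ≤ t → min (G1 ω) (G2 ω) ≠ g := ne_of_not_le_of_le hgt
  simp only [Wset, evACS, evA, Set.mem_inter_iff, Set.mem_ofPred_eq]
  tauto

variable {K : ℕ} {X : Ω → Fin K → ℝ} {C : Set Ω}

lemma ipw_of_notMem {h : (Fin K → ℝ) → ℝ} {ω : Ω} (hω : ω ∉ C) : ipw X h C ω = 0 := by
  simp [ipw, hω]

lemma ipw_ae_eq [MeasurableSpace Ω] {μ : Measure Ω} {h h' : (Fin K → ℝ) → ℝ}
    (hh : ∀ᵐ ω ∂μ, ω ∈ C → h (X ω) = h' (X ω)) : ipw X h C =ᵐ[μ] ipw X h' C := by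
  filter_upwards [hh] with ω hω
  by_cases hC : ω ∈ C
  · simp only [ipw, hω hC]
  · rw [ipw_of_notMem hC, ipw_of_notMem hC]

end TwoEventDiD

theorem dr_moment_equivalence_general
    {Ω : Type*} [MeasurableSpace Ω] (μ : Measure Ω) [IsProbabilityMeasure μ]
    (G1 G2 : Ω → ℕ∞) (Y : ℕ → ℕ∞ → ℕ∞ → Ω → ℝ)
    (hmG1 : ∀ g : ℕ∞, MeasurableSet {ω | G1 ω = g})
    (hmG2 : ∀ g : ℕ∞, MeasurableSet {ω | G2 ω = g})
    {K : ℕ} (X : Ω → Fin K → ℝ) (hX : Measurable X)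
    (g1 g2 : ℕ∞)
    (g : ℕ) (hg : (g : ℕ∞) = min g1 g2)
    (t : ℕ) (hgt : g ≤ t)
    (hW : 0 < μ (Wset G1 G2 g1 g2 g))
    -- chosen versions of the two propensity scores
    (hp hpCS : (Fin K → ℝ) → ℝ)
    (hpver : (fun ω => hp (X ω))
      =ᵐ[μ[|evA G1 G2 g1 g2 t]]
      (μ[|evA G1 G2 g1 g2 t])[
        Set.indicator {ω | G1 ω = g1 ∧ G2 ω = g2} (fun _ => (1 : ℝ)) | mX X])
    (hpCSver : (fun ω => hpCS (X ω))
      =ᵐ[(μ[|Wset G1 G2 g1 g2 g])[|evACS G1 G2 g t]]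
      ((μ[|Wset G1 G2 g1 g2 g])[|evACS G1 G2 g t])[
        Set.indicator {ω | min (G1 ω) (G2 ω) = (g : ℕ∞)} (fun _ => (1 : ℝ)) | mX X])
    -- `p(X) < 1` and `p^CS(X) < 1` almost surely
    (hlt : ∀ᵐ ω ∂μ, hp (X ω) < 1)
    -- chosen versions of the two outcome control functions
    (hm hmCS : (Fin K → ℝ) → ℝ) (hmm : Measurable hm) (hmCSm : Measurable hmCS)
    (hmver : (fun ω => hm (X ω))
      =ᵐ[μ[|evComp G1 G2 g1 g2 t]]
      (μ[|evComp G1 G2 g1 g2 t])[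
        fun ω => Yr G1 G2 Y t ω - Yr G1 G2 Y (g - 1) ω | mX X])
    (hmCSver : (fun ω => hmCS (X ω))
      =ᵐ[(μ[|Wset G1 G2 g1 g2 g])[|evCompCS G1 G2 g t]]
      ((μ[|Wset G1 G2 g1 g2 g])[|evCompCS G1 G2 g t])[
        fun ω => Yr G1 G2 Y t ω - Yr G1 G2 Y (g - 1) ω | mX X])
    :
    ∫ ω, (Set.indicator {ω' | G1 ω' = g1 ∧ G2 ω' = g2} (fun _ => (1 : ℝ)) ω
            / (∫ ω', Set.indicator {ω'' | G1 ω'' = g1 ∧ G2 ω'' = g2} (fun _ => (1 : ℝ)) ω' ∂μ)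
          - ipw X hp (evComp G1 G2 g1 g2 t) ω
            / (∫ ω', ipw X hp (evComp G1 G2 g1 g2 t) ω' ∂μ))
        * (Yr G1 G2 Y t ω - Yr G1 G2 Y (g - 1) ω - hm (X ω)) ∂μ
    = ∫ ω, (Set.indicator {ω' | min (G1 ω') (G2 ω') = (g : ℕ∞)} (fun _ => (1 : ℝ)) ω
            / (∫ ω', Set.indicator {ω'' | min (G1 ω'') (G2 ω'') = (g : ℕ∞)} (fun _ => (1 : ℝ)) ω'
                ∂(μ[|Wset G1 G2 g1 g2 g]))
          - ipw X hpCS (evCompCS G1 G2 g t) ω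
            / (∫ ω', ipw X hpCS (evCompCS G1 G2 g t) ω' ∂(μ[|Wset G1 G2 g1 g2 g])))
        * (Yr G1 G2 Y t ω - Yr G1 G2 Y (g - 1) ω - hmCS (X ω)) ∂(μ[|Wset G1 G2 g1 g2 g]) := by
  set A : Set Ω := {ω | G1 ω = g1 ∧ G2 ω = g2}
  set C := evComp G1 G2 g1 g2 t
  set W := Wset G1 G2 g1 g2 g
  have hmeas := measurableSet_setOf_of_countable hmG1 hmG2
  have hA : MeasurableSet A := hmeas fun a b => a = g1 ∧ b = g2
  have hC : MeasurableSet C := hmeas fun a b => ¬ min a b ≤ (t : ℕ∞) ∧ ¬(a = g1 ∧ b = g2)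
  have hWm : MeasurableSet W := hmeas fun a b => min a b ≠ (g : ℕ∞) ∨ (a = g1 ∧ b = g2)
  have hACS : MeasurableSet (evACS G1 G2 g t) := hmeas fun a b =>
    min a b = (g : ℕ∞) ∨ (¬ min a b ≤ (t : ℕ∞) ∧ min a b ≠ (g : ℕ∞))
  rw [cond_cond_eq_cond_inter hWm hACS, Wset_inter_evACS hg hgt] at hpCSver
  rw [← evComp_eq_evCompCS hg hgt, cond_cond_eq_cond_inter hWm hC,
    Set.inter_eq_right.mpr (evComp_subset_Wset hgt)] at hmCSver
  have hpropensity : ∀ᵐ ω ∂μ, ω ∈ A ∪ C → hp (X ω) = hpCS (X ω) :=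
    (ae_cond_iff (hA.union hC)).mp <| hpver.trans <| (condExp_congr_ae <|
      indicator_ae_eq_cond_of_inter_eq (hA.union hC) (evA_inter_min_eq hg hgt).symm _).trans
        hpCSver.symm
  have hcontrol : ∀ᵐ ω ∂μ, ω ∈ A ∪ C → hm (X ω) = hmCS (X ω) :=
    ae_imp_of_ae_imp_of_condExp_lt_one hX.comap_le hA hC
      ⟨_, measurableSet_eq_fun hmm hmCSm, rfl⟩ hpver hlt
      ((ae_cond_iff hC).mp (hmver.trans hmCSver.symm))
  have hweights : ipw X hpCS (evCompCS G1 G2 g t) =ᵐ[μ] ipw X hp C := by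
    rw [← evComp_eq_evCompCS hg hgt]
    exact ipw_ae_eq (hpropensity.mono fun ω h hω => (h (Or.inr hω)).symm)
  show drMoment μ _ _ _ (fun ω => hm (X ω)) = drMoment (μ[|W]) _ _ _ (fun ω => hmCS (X ω))
  rw [drMoment_congr_ae (indicator_ae_eq_cond_of_inter_eq hWm (Wset_inter_min_eq hg) _)
      (cond_absolutelyContinuous.ae_le hweights),
    drMoment_cond hW.ne' (fun ω hω => Set.indicator_of_notMem (mt (cohort_subset_Wset ·) hω) _)
      (fun ω hω => ipw_of_notMem (mt (evComp_subset_Wset hgt ·) hω))]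
  exact drMoment_congr_of_ae_eq_on
    (fun ω hω => Set.indicator_of_notMem (fun h => hω (Or.inl h)) _)
    (fun ω hω => ipw_of_notMem (fun h => hω (Or.inr h))) hcontrol

/-- Lemma 2, doubly-robust moment equivalence: the two-event
doubly-robust moment equals the combined-event one under `P(·|W=1)`. -/
theorem dr_moment_equivalence
    {Ω : Type*} [MeasurableSpace Ω] (μ : Measure Ω) [IsProbabilityMeasure μ]
    (T : ℕ) (hT : 2 ≤ T)
    (G1 G2 : Ω → ℕ∞) (Y : ℕ → ℕ∞ → ℕ∞ → Ω → ℝ)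
    (hG1mem : ∀ ω, InCohort T (G1 ω)) (hG2mem : ∀ ω, InCohort T (G2 ω))
    (hmG1 : ∀ g : ℕ∞, MeasurableSet {ω | G1 ω = g})
    (hmG2 : ∀ g : ℕ∞, MeasurableSet {ω | G2 ω = g})
    (hYint : ∀ (t : ℕ) (g1 g2 : ℕ∞), Integrable (Y t g1 g2) μ)
    (hYtop1 : ∀ (t : ℕ) (g2 : ℕ∞), Y t ⊤ g2 = Y t 0 g2)
    (hYtop2 : ∀ (t : ℕ) (g1 : ℕ∞), Y t g1 ⊤ = Y t g1 0)
    {K : ℕ} (X : Ω → Fin K → ℝ) (hX : Measurable X)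
    (g1 g2 : ℕ∞) (hg1 : InCohort T g1) (hg2 : InCohort T g2)
    (g : ℕ) (hg : (g : ℕ∞) = min g1 g2)
    (t : ℕ) (hgt : g ≤ t) (htT : t ≤ T)
    (hW : 0 < μ (Wset G1 G2 g1 g2 g))
    (hYrt : Integrable (Yr G1 G2 Y t) μ)
    (hYrb : Integrable (Yr G1 G2 Y (g - 1)) μ)
    (hcoh : 0 < μ {ω | G1 ω = g1 ∧ G2 ω = g2})
    (hctrl : 0 < μ (evComp G1 G2 g1 g2 t))
    -- chosen versions of the two propensity scores
    (hp hpCS : (Fin K → ℝ) → ℝ) (hpm : Measurable hp) (hpCSm : Measurable hpCS)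
    (hpver : (fun ω => hp (X ω))
      =ᵐ[μ[|evA G1 G2 g1 g2 t]]
      (μ[|evA G1 G2 g1 g2 t])[
        Set.indicator {ω | G1 ω = g1 ∧ G2 ω = g2} (fun _ => (1 : ℝ)) | mX X])
    (hpCSver : (fun ω => hpCS (X ω))
      =ᵐ[(μ[|Wset G1 G2 g1 g2 g])[|evACS G1 G2 g t]]
      ((μ[|Wset G1 G2 g1 g2 g])[|evACS G1 G2 g t])[
        Set.indicator {ω | min (G1 ω) (G2 ω) = (g : ℕ∞)} (fun _ => (1 : ℝ)) | mX X])
    -- `p(X) < 1` and `p^CS(X) < 1` almost surely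
    (hlt : ∀ᵐ ω ∂μ, hp (X ω) < 1) (hltCS : ∀ᵐ ω ∂μ, hpCS (X ω) < 1)
    -- `E[w] > 0` and `E_{P_W}[w^CS] > 0`
    (hEw : 0 < ∫ ω, ipw X hp (evComp G1 G2 g1 g2 t) ω ∂μ)
    (hEwCS : 0 < ∫ ω, ipw X hpCS (evCompCS G1 G2 g t) ω ∂(μ[|Wset G1 G2 g1 g2 g]))
    -- chosen versions of the two outcome control functions
    (hm hmCS : (Fin K → ℝ) → ℝ) (hmm : Measurable hm) (hmCSm : Measurable hmCS)
    (hmver : (fun ω => hm (X ω))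
      =ᵐ[μ[|evComp G1 G2 g1 g2 t]]
      (μ[|evComp G1 G2 g1 g2 t])[
        fun ω => Yr G1 G2 Y t ω - Yr G1 G2 Y (g - 1) ω | mX X])
    (hmCSver : (fun ω => hmCS (X ω))
      =ᵐ[(μ[|Wset G1 G2 g1 g2 g])[|evCompCS G1 G2 g t]]
      ((μ[|Wset G1 G2 g1 g2 g])[|evCompCS G1 G2 g t])[
        fun ω => Yr G1 G2 Y t ω - Yr G1 G2 Y (g - 1) ω | mX X])
    :
    ∫ ω, (Set.indicator {ω' | G1 ω' = g1 ∧ G2 ω' = g2} (fun _ => (1 : ℝ)) ω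
            / (∫ ω', Set.indicator {ω'' | G1 ω'' = g1 ∧ G2 ω'' = g2} (fun _ => (1 : ℝ)) ω' ∂μ)
          - ipw X hp (evComp G1 G2 g1 g2 t) ω
            / (∫ ω', ipw X hp (evComp G1 G2 g1 g2 t) ω' ∂μ))
        * (Yr G1 G2 Y t ω - Yr G1 G2 Y (g - 1) ω - hm (X ω)) ∂μ
    = ∫ ω, (Set.indicator {ω' | min (G1 ω') (G2 ω') = (g : ℕ∞)} (fun _ => (1 : ℝ)) ω
            / (∫ ω', Set.indicator {ω'' | min (G1 ω'') (G2 ω'') = (g : ℕ∞)} (fun _ => (1 : ℝ)) ω'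
                ∂(μ[|Wset G1 G2 g1 g2 g]))
          - ipw X hpCS (evCompCS G1 G2 g t) ω
            / (∫ ω', ipw X hpCS (evCompCS G1 G2 g t) ω' ∂(μ[|Wset G1 G2 g1 g2 g])))
        * (Yr G1 G2 Y t ω - Yr G1 G2 Y (g - 1) ω - hmCS (X ω)) ∂(μ[|Wset G1 G2 g1 g2 g]) :=
  dr_moment_equivalence_general μ G1 G2 Y hmG1 hmG2 X hX g1 g2 g hg t hgt hW hp hpCS hpver hpCSver
    hlt hm hmCS hmm hmCSm hmver hmCSver
end
end

section
/- Under No Anticipation and part (ii) of Parallel Treatment Effects, the imputation identifies the target effect for treated-then-confounded cohorts: let g¹ < g² be finite elements of {2,…,T} with P(G¹=g¹, G²=g²) > 0, and let t with g² ≤ t ≤ T satisfy P(G² > t | G¹=g¹) > 0 (i.e. P(D²_t=0, G¹=g¹) > 0). Then ATT¹(g¹,g²,t) = ATT(g¹,g²,g²−1) + Σ_{s² ∈ ({t+1,…,T} ∪ {∞})} [ATT(g¹,s²,t) − ATT(g¹,s²,g²−1)]·P(G²=s² | G¹=g¹, D²_t=0), where any summand whose conditioning event {G¹=g¹, G²=s²}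 has probability zero is taken to be zero. -/
/- Two-event staggered Difference-in-Differences setup (Callaway–Sant'Anna with a
confounding event).  Cohorts take values in `{2,…,T} ∪ {∞} ⊆ ℕ∞`; the potential-outcome
index `0 : ℕ∞` codes "never treated by that event". -/

open MeasureTheory ProbabilityTheory

noncomputable section

open TwoEventDiD

section Aux

variable {Ω : Type*} [MeasurableSpace Ω]

lemma integrable_cond_aux {μ : Measure Ω} {A : Set Ω} (hA : μ A ≠ 0) {f : Ω → ℝ}
    (hf : Integrable f μ) : Integrable f (μ[|A]) := by
  rw [ProbabilityTheory.cond]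
  exact (hf.restrict (s := A)).smul_measure (ENNReal.inv_ne_top.mpr hA)

lemma cE_sub_aux {μ : Measure Ω} {A : Set Ω} (hA : μ A ≠ 0) {f g : Ω → ℝ}
    (hf : Integrable f μ) (hg : Integrable g μ) :
    cE μ A (fun ω => f ω - g ω) = cE μ A f - cE μ A g :=
  integral_sub (integrable_cond_aux hA hf) (integrable_cond_aux hA hg)

end Aux

/-- Theorem 3, treated-then-confounded case: the imputation strategy
identifies the target effect.  Summands whose conditioning cohort has probability zero
vanish automatically, since both the conditional expectations with respect to the
(zero) conditional measure and the conditional probability weight are zero. -/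
theorem imputation_identifies_target_effect
    {Ω : Type*} [MeasurableSpace Ω] (μ : Measure Ω) [IsProbabilityMeasure μ]
    (T : ℕ) (hT : 2 ≤ T)
    (G1 G2 : Ω → ℕ∞) (Y : ℕ → ℕ∞ → ℕ∞ → Ω → ℝ)
    (hG1mem : ∀ ω, InCohort T (G1 ω)) (hG2mem : ∀ ω, InCohort T (G2 ω))
    (hmG1 : ∀ g : ℕ∞, MeasurableSet {ω | G1 ω = g})
    (hmG2 : ∀ g : ℕ∞, MeasurableSet {ω | G2 ω = g})
    (hYint : ∀ (t : ℕ) (g1 g2 : ℕ∞), Integrable (Y t g1 g2) μ)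
    (hYtop1 : ∀ (t : ℕ) (g2 : ℕ∞), Y t ⊤ g2 = Y t 0 g2)
    (hYtop2 : ∀ (t : ℕ) (g1 : ℕ∞), Y t g1 ⊤ = Y t g1 0)
    (hNA : NoAnticipation μ G1 G2 Y T)
    -- Parallel Treatment Effects, part (ii)
    (hPTE2 : ∀ (a1 : ℕ∞) (a2 : ℕ) (s2 : ℕ∞) (u : ℕ),
      InCohort T a1 → 2 ≤ a2 → a2 ≤ T → InCohort T s2 →
      a1 ≤ (u : ℕ∞) → (u : ℕ∞) ≤ s2 →
      0 < μ {ω | G1 ω = a1 ∧ G2 ω = (a2 : ℕ∞)} →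
      0 < μ {ω | G1 ω = a1 ∧ G2 ω = s2} →
      ATT1 μ G1 G2 Y a1 (a2 : ℕ∞) u - ATT1 μ G1 G2 Y a1 (a2 : ℕ∞) (a2 - 1)
        = ATT1 μ G1 G2 Y a1 s2 u - ATT1 μ G1 G2 Y a1 s2 (a2 - 1))
    -- cohorts `g¹ < g²` finite, confounded period `t ≥ g²`
    (g1 g2 : ℕ) (hg1 : 2 ≤ g1) (hg12 : g1 < g2) (hg2T : g2 ≤ T)
    (hcoh : 0 < μ {ω | G1 ω = (g1 : ℕ∞) ∧ G2 ω = (g2 : ℕ∞)})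
    (t : ℕ) (hg2t : g2 ≤ t) (htT : t ≤ T)
    -- `P(G² > t | G¹ = g¹) > 0`
    (hctrl : 0 < μ {ω | G1 ω = (g1 : ℕ∞) ∧ ¬ G2 ω ≤ (t : ℕ∞)}) :
    ATT1 μ G1 G2 Y (g1 : ℕ∞) (g2 : ℕ∞) t
    = ATT μ G1 G2 Y (g1 : ℕ∞) (g2 : ℕ∞) (g2 - 1)
      + ((∑ s ∈ Finset.Icc (t + 1) T,
          (ATT μ G1 G2 Y (g1 : ℕ∞) (s : ℕ∞) t - ATT μ G1 G2 Y (g1 : ℕ∞) (s : ℕ∞) (g2 - 1))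
            * cP μ {ω | G1 ω = (g1 : ℕ∞) ∧ ¬ G2 ω ≤ (t : ℕ∞)} {ω | G2 ω = (s : ℕ∞)})
        + (ATT μ G1 G2 Y (g1 : ℕ∞) ⊤ t - ATT μ G1 G2 Y (g1 : ℕ∞) ⊤ (g2 - 1))
            * cP μ {ω | G1 ω = (g1 : ℕ∞) ∧ ¬ G2 ω ≤ (t : ℕ∞)} {ω | G2 ω = ⊤}) := by
  have hg1T : g1 ≤ T := le_of_lt (lt_of_lt_of_le hg12 hg2T)
  have hg1coh : InCohort T (g1 : ℕ∞) :=
    Or.inr ⟨by exact_mod_cast hg1, by exact_mod_cast hg1T⟩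
  have hg2coh : InCohort T (g2 : ℕ∞) :=
    Or.inr ⟨by exact_mod_cast (by omega : 2 ≤ g2), by exact_mod_cast hg2T⟩
  set A : Set Ω := {ω | G1 ω = (g1 : ℕ∞) ∧ ¬ G2 ω ≤ (t : ℕ∞)} with hAdef
  have hA0 : μ A ≠ 0 := hctrl.ne'
  have hAmeas : MeasurableSet A := by
    have hrepr : A = {ω | G1 ω = (g1 : ℕ∞)} ∩
        (⋃ n ∈ Finset.range (t + 1), {ω | G2 ω = (n : ℕ∞)})ᶜ := by
      ext ω
      simp only [hAdef, Set.mem_setOf_eq, Set.mem_inter_iff, Set.mem_compl_iff,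
        Set.mem_iUnion, Finset.mem_range, not_exists]
      constructor
      · rintro ⟨h1, h2⟩
        refine ⟨h1, fun n hn hne => h2 ?_⟩
        rw [hne]; exact_mod_cast Nat.lt_succ_iff.mp hn
      · rintro ⟨h1, h2⟩
        refine ⟨h1, fun hle => ?_⟩
        rcases WithTop.le_coe_iff.mp hle with ⟨n, hne, hnt⟩
        exact h2 n (Nat.lt_succ_of_le hnt) hne
    rw [hrepr]
    exact (hmG1 _).inter
      ((Finset.range (t + 1)).measurableSet_biUnion (fun n _ => hmG2 _)).compl
  -- ATT = ATT1 via No Anticipation, finite second cohort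
  have hATTeq : ∀ s : ℕ, 2 ≤ s → s ≤ T → ∀ u : ℕ, 1 ≤ u → g1 ≤ u → u < s →
      0 < μ {ω | G1 ω = (g1 : ℕ∞) ∧ G2 ω = (s : ℕ∞)} →
      ATT μ G1 G2 Y (g1 : ℕ∞) (s : ℕ∞) u = ATT1 μ G1 G2 Y (g1 : ℕ∞) (s : ℕ∞) u := by
    intro s hs2 hsT u h1u hg1u hus hpos
    have hscoh : InCohort T (s : ℕ∞) :=
      Or.inr ⟨by exact_mod_cast hs2, by exact_mod_cast hsT⟩
    have hmax : (u : ℕ∞) < max (g1 : ℕ∞) (s : ℕ∞) :=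
      lt_max_iff.mpr (Or.inr (by exact_mod_cast hus))
    have hNA2 := (hNA (g1 : ℕ∞) (s : ℕ∞) hg1coh hscoh hpos u h1u hmax).2.1
      ⟨by exact_mod_cast hg1u, by exact_mod_cast hus⟩
    have hS0 : μ {ω | G1 ω = (g1 : ℕ∞) ∧ G2 ω = (s : ℕ∞)} ≠ 0 := hpos.ne'
    unfold ATT ATT1
    rw [cE_sub_aux hS0 (hYint u _ _) (hYint u 0 0),
      cE_sub_aux hS0 (hYint u _ _) (hYint u 0 0), hNA2]
  -- ATT = ATT1 for the never-treated (⊤) second cohort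
  have hATTtop : ∀ u : ℕ,
      ATT μ G1 G2 Y (g1 : ℕ∞) ⊤ u = ATT1 μ G1 G2 Y (g1 : ℕ∞) ⊤ u := by
    intro u; unfold ATT ATT1; rw [hYtop2]
  -- the constant slope
  set c : ℝ := ATT1 μ G1 G2 Y (g1 : ℕ∞) (g2 : ℕ∞) t
      - ATT1 μ G1 G2 Y (g1 : ℕ∞) (g2 : ℕ∞) (g2 - 1) with hcdef
  -- zero-probability cohorts have zero weight
  have hwzero : ∀ s : ℕ∞, μ {ω | G1 ω = (g1 : ℕ∞) ∧ G2 ω = s} = 0 →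
      cP μ A {ω | G2 ω = s} = 0 := by
    intro s hs
    have hsub : A ∩ {ω | G2 ω = s} ⊆ {ω | G1 ω = (g1 : ℕ∞) ∧ G2 ω = s} := by
      rintro ω ⟨⟨h1, _⟩, h2⟩; exact ⟨h1, h2⟩
    have hz : μ[|A] {ω | G2 ω = s} = 0 := by
      rw [ProbabilityTheory.cond_apply hAmeas]
      simp [measure_mono_null hsub hs]
    simp [cP, hz]
  -- each finite summand equals c · weight
  have hterm : ∀ s ∈ Finset.Icc (t + 1) T,
      (ATT μ G1 G2 Y (g1 : ℕ∞) (s : ℕ∞) t - ATT μ G1 G2 Y (g1 : ℕ∞) (s : ℕ∞) (g2 - 1))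
        * cP μ A {ω | G2 ω = (s : ℕ∞)}
      = c * cP μ A {ω | G2 ω = (s : ℕ∞)} := by
    intro s hs
    rw [Finset.mem_Icc] at hs
    rcases eq_or_ne (μ {ω | G1 ω = (g1 : ℕ∞) ∧ G2 ω = (s : ℕ∞)}) 0 with hz | hnz
    · rw [hwzero _ hz]; ring
    · have hpos := hnz.bot_lt
      have hscoh : InCohort T (s : ℕ∞) :=
        Or.inr ⟨by exact_mod_cast (by omega : 2 ≤ s), by exact_mod_cast hs.2⟩
      rw [hATTeq s (by omega) hs.2 t (by omega) (by omega) (by omega) hpos,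
        hATTeq s (by omega) hs.2 (g2 - 1) (by omega) (by omega) (by omega) hpos]
      have hPTE := hPTE2 (g1 : ℕ∞) g2 (s : ℕ∞) t hg1coh (by omega) hg2T hscoh
        (by exact_mod_cast (by omega : g1 ≤ t)) (by exact_mod_cast (by omega : t ≤ s))
        hcoh hpos
      rw [hcdef, hPTE]
  -- the ⊤ summand equals c · weight
  have htermtop :
      (ATT μ G1 G2 Y (g1 : ℕ∞) ⊤ t - ATT μ G1 G2 Y (g1 : ℕ∞) ⊤ (g2 - 1))
        * cP μ A {ω | G2 ω = ⊤}
      = c * cP μ A {ω | G2 ω = ⊤} := by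
    rcases eq_or_ne (μ {ω | G1 ω = (g1 : ℕ∞) ∧ G2 ω = (⊤ : ℕ∞)}) 0 with hz | hnz
    · rw [hwzero _ hz]; ring
    · have hpos := hnz.bot_lt
      have hPTE := hPTE2 (g1 : ℕ∞) g2 ⊤ t hg1coh (by omega) hg2T (Or.inl rfl)
        (by exact_mod_cast (by omega : g1 ≤ t)) le_top hcoh hpos
      rw [hATTtop, hATTtop, hcdef, hPTE]
  -- the weights sum to one
  have hwsum : (∑ s ∈ Finset.Icc (t + 1) T, cP μ A {ω | G2 ω = (s : ℕ∞)})
      + cP μ A {ω | G2 ω = ⊤} = 1 := by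
    haveI : IsProbabilityMeasure (μ[|A]) :=
      ProbabilityTheory.cond_isProbabilityMeasure hA0
    set U : Set Ω := (⋃ s ∈ Finset.Icc (t + 1) T, {ω | G2 ω = (s : ℕ∞)})
      ∪ {ω | G2 ω = (⊤ : ℕ∞)} with hUdef
    have hAU : A ⊆ U := by
      rintro ω ⟨h1, h2⟩
      rcases hG2mem ω with htop | ⟨_, hle⟩
      · exact Or.inr htop
      · rcases WithTop.le_coe_iff.mp hle with ⟨n, hne, hnT⟩
        have hnt : t + 1 ≤ n := by
          by_contra hlt
          exact h2 (by rw [hne]; exact Nat.cast_le.mpr (by omega))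
        exact Or.inl (Set.mem_biUnion (Finset.mem_Icc.mpr ⟨hnt, hnT⟩) hne)
    have hνU : μ[|A] U = 1 := by
      refine le_antisymm prob_le_one ?_
      have hAA : μ[|A] A = 1 := by
        rw [ProbabilityTheory.cond_apply hAmeas, Set.inter_self]
        exact ENNReal.inv_mul_cancel hA0 (measure_ne_top μ A)
      calc (1 : ENNReal) = μ[|A] A := hAA.symm
        _ ≤ μ[|A] U := measure_mono hAU
    have hdisj : Disjoint (⋃ s ∈ Finset.Icc (t + 1) T, {ω | G2 ω = (s : ℕ∞)})
        {ω | G2 ω = (⊤ : ℕ∞)} := by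
      rw [Set.disjoint_left]
      rintro ω hω htop
      simp only [Set.mem_iUnion, Set.mem_setOf_eq] at hω htop
      rcases hω with ⟨s, _, hs⟩
      rw [htop] at hs
      exact (WithTop.coe_ne_top (a := s)) hs.symm
    have hpd : (↑(Finset.Icc (t + 1) T) : Set ℕ).PairwiseDisjoint
        (fun s : ℕ => {ω | G2 ω = (s : ℕ∞)}) := by
      intro a _ b _ hab
      rw [Function.onFun, Set.disjoint_left]
      rintro ω ha hb
      simp only [Set.mem_setOf_eq] at ha hb
      exact hab (by exact_mod_cast ha.symm.trans hb)
    have hU : μ[|A] U = (∑ s ∈ Finset.Icc (t + 1) T, μ[|A] {ω | G2 ω = (s : ℕ∞)})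
        + μ[|A] {ω | G2 ω = (⊤ : ℕ∞)} := by
      rw [hUdef, measure_union hdisj (hmG2 ⊤),
        measure_biUnion_finset hpd (fun s _ => hmG2 _)]
    have hfin : ∀ s ∈ Finset.Icc (t + 1) T, μ[|A] {ω | G2 ω = (s : ℕ∞)} ≠ ⊤ :=
      fun s _ => measure_ne_top _ _
    have := congrArg ENNReal.toReal (hU.symm.trans hνU)
    rw [ENNReal.toReal_add (by
        exact ENNReal.sum_ne_top.mpr hfin) (measure_ne_top _ _),
      ENNReal.toReal_sum hfin, ENNReal.toReal_one] at this
    simpa [cP] using this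
  -- ATT(g¹,g²,g²−1) = ATT1(g¹,g²,g²−1)
  have hbase : ATT μ G1 G2 Y (g1 : ℕ∞) (g2 : ℕ∞) (g2 - 1)
      = ATT1 μ G1 G2 Y (g1 : ℕ∞) (g2 : ℕ∞) (g2 - 1) :=
    hATTeq g2 (by omega) hg2T (g2 - 1) (by omega) (by omega) (by omega) hcoh
  rw [Finset.sum_congr rfl hterm, htermtop, hbase, ← Finset.mul_sum, ← mul_add, hwsum]
  rw [hcdef]; ring
end
end

section
/- Under No Anticipation, Additive Effects, and part (i) of Parallel Treatment Effects, the double DiD identifies the target effect for confounded-then-treated cohorts: let g² < g¹ be elements of {2,…,T} ∪ {∞} with g¹ finite and P(G¹=g¹, G²=g²) > 0, and let t with g¹ ≤ t ≤ T satisfy P(G¹ > t | G²=g²) > 0 (i.e. P(D¹_t=0, G²=g²) > 0). Then ATT¹(g¹,g²,t) = ATT(g¹,g²,t) − ATT(g¹,g²,g¹−1) − Σ_{s¹ ∈ ({t+1,…,T} ∪ {∞})} [ATT(s¹,g²,t) − ATT(s¹,g²,g¹−1)]·P(G¹=s¹ | G²=g², D¹_t=0), where any summand whose conditioning event {G¹=s¹,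 G²=g²} has probability zero is taken to be zero. -/
/- Two-event staggered Difference-in-Differences setup (Callaway–Sant'Anna with a
confounding event).  Cohorts take values in `{2,…,T} ∪ {∞} ⊆ ℕ∞`; the potential-outcome
index `0 : ℕ∞` codes "never treated by that event". -/

open MeasureTheory ProbabilityTheory

noncomputable section

open TwoEventDiD

section Aux
variable {Ω : Type*} [MeasurableSpace Ω]

lemma aux_cond_zero (μ : Measure Ω) {A : Set Ω} (h : μ A = 0) : μ[|A] = 0 := by
  rw [ProbabilityTheory.cond, Measure.restrict_eq_zero.mpr h, smul_zero]

lemma aux_integrable_cond (μ : Measure Ω) (A : Set Ω) {f : Ω → ℝ}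
    (hf : Integrable f μ) : Integrable f (μ[|A]) := by
  rcases eq_or_ne (μ A) 0 with h | h
  · rw [aux_cond_zero μ h]; exact integrable_zero_measure
  · rw [ProbabilityTheory.cond]
    exact (hf.restrict).smul_measure (ENNReal.inv_ne_top.mpr h)

lemma aux_cE_sub (μ : Measure Ω) (A : Set Ω) {f g : Ω → ℝ}
    (hf : Integrable f μ) (hg : Integrable g μ) :
    cE μ A (fun ω => f ω - g ω) = cE μ A f - cE μ A g :=
  integral_sub (aux_integrable_cond μ A hf) (aux_integrable_cond μ A hg)

lemma aux_nat_of_ne_top : ∀ x : ℕ∞, x ≠ ⊤ → ∃ m : ℕ, x = (m : ℕ∞) :=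
  fun x hx => ⟨x.toNat, (ENat.coe_toNat hx).symm⟩

end Aux


/-- Theorem 3, confounded-then-treated case: the double DiD identifies
the target effect.  Summands whose conditioning cohort has probability zero vanish
automatically, since both the conditional expectations with respect to the (zero)
conditional measure and the conditional probability weight are zero. -/
theorem double_DiD_identifies_target_effect
    {Ω : Type*} [MeasurableSpace Ω] (μ : Measure Ω) [IsProbabilityMeasure μ]
    (T : ℕ) (hT : 2 ≤ T)
    (G1 G2 : Ω → ℕ∞) (Y : ℕ → ℕ∞ → ℕ∞ → Ω → ℝ)
    (hG1mem : ∀ ω, InCohort T (G1 ω)) (hG2mem : ∀ ω, InCohort T (G2 ω))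
    (hmG1 : ∀ g : ℕ∞, MeasurableSet {ω | G1 ω = g})
    (hmG2 : ∀ g : ℕ∞, MeasurableSet {ω | G2 ω = g})
    (hYint : ∀ (t : ℕ) (g1 g2 : ℕ∞), Integrable (Y t g1 g2) μ)
    (hYtop1 : ∀ (t : ℕ) (g2 : ℕ∞), Y t ⊤ g2 = Y t 0 g2)
    (hYtop2 : ∀ (t : ℕ) (g1 : ℕ∞), Y t g1 ⊤ = Y t g1 0)
    (hNA : NoAnticipation μ G1 G2 Y T)
    -- Additive Effects
    (hAdd : ∀ (a1 a2 : ℕ∞) (u : ℕ), InCohort T a1 → InCohort T a2 →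
      0 < μ {ω | G1 ω = a1 ∧ G2 ω = a2} →
      ATT μ G1 G2 Y a1 a2 u = ATT1 μ G1 G2 Y a1 a2 u + ATT2 μ G1 G2 Y a1 a2 u)
    -- Parallel Treatment Effects, part (i)
    (hPTE1 : ∀ (a1 : ℕ) (s1 : ℕ∞) (a2 : ℕ∞) (u : ℕ),
      2 ≤ a1 → a1 ≤ T → InCohort T s1 → InCohort T a2 →
      a2 ≤ (u : ℕ∞) → (u : ℕ∞) ≤ s1 →
      0 < μ {ω | G1 ω = (a1 : ℕ∞) ∧ G2 ω = a2} →
      0 < μ {ω | G1 ω = s1 ∧ G2 ω = a2} →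
      ATT2 μ G1 G2 Y (a1 : ℕ∞) a2 u - ATT2 μ G1 G2 Y (a1 : ℕ∞) a2 (a1 - 1)
        = ATT2 μ G1 G2 Y s1 a2 u - ATT2 μ G1 G2 Y s1 a2 (a1 - 1))
    -- cohorts `g² < g¹` with `g¹` finite, confounded period `t ≥ g¹`
    (g1 : ℕ) (g2 : ℕ∞) (hg1 : 2 ≤ g1) (hg1T : g1 ≤ T) (hg2 : InCohort T g2)
    (hg21 : g2 < (g1 : ℕ∞))
    (hcoh : 0 < μ {ω | G1 ω = (g1 : ℕ∞) ∧ G2 ω = g2})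
    (t : ℕ) (hg1t : g1 ≤ t) (htT : t ≤ T)
    -- `P(G¹ > t | G² = g²) > 0`
    (hctrl : 0 < μ {ω | G2 ω = g2 ∧ ¬ G1 ω ≤ (t : ℕ∞)}) :
    ATT1 μ G1 G2 Y (g1 : ℕ∞) g2 t
    = ATT μ G1 G2 Y (g1 : ℕ∞) g2 t - ATT μ G1 G2 Y (g1 : ℕ∞) g2 (g1 - 1)
      - ((∑ s ∈ Finset.Icc (t + 1) T,
          (ATT μ G1 G2 Y (s : ℕ∞) g2 t - ATT μ G1 G2 Y (s : ℕ∞) g2 (g1 - 1))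
            * cP μ {ω | G2 ω = g2 ∧ ¬ G1 ω ≤ (t : ℕ∞)} {ω | G1 ω = (s : ℕ∞)})
        + (ATT μ G1 G2 Y ⊤ g2 t - ATT μ G1 G2 Y ⊤ g2 (g1 - 1))
            * cP μ {ω | G2 ω = g2 ∧ ¬ G1 ω ≤ (t : ℕ∞)} {ω | G1 ω = ⊤}) := by

  -- Basic facts about g2
  have hg2ne : g2 ≠ ⊤ := hg21.ne_top
  obtain ⟨n2, rfl⟩ : ∃ n : ℕ, g2 = (n : ℕ∞) := aux_nat_of_ne_top g2 hg2ne
  have hn2g1 : n2 < g1 := by exact_mod_cast hg21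
  set A := {ω | G2 ω = (n2 : ℕ∞) ∧ ¬ G1 ω ≤ (t : ℕ∞)} with hAdef
  -- Measurability of A
  have hmLe : MeasurableSet {ω | G1 ω ≤ (t : ℕ∞)} := by
    have hset : {ω | G1 ω ≤ (t : ℕ∞)} = ⋃ s ∈ Finset.Iic t, {ω | G1 ω = (s : ℕ∞)} := by
      ext ω
      simp only [Set.mem_setOf_eq, Set.mem_iUnion, Finset.mem_Iic, exists_prop]
      constructor
      · intro h
        obtain ⟨m, hm⟩ := aux_nat_of_ne_top _ (ne_top_of_le_ne_top (ENat.coe_ne_top t) h)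
        rw [hm] at h
        exact ⟨m, by exact_mod_cast h, hm⟩
      · rintro ⟨m, hmt, hm⟩
        rw [hm]; exact_mod_cast hmt
    rw [hset]
    exact Finset.measurableSet_biUnion _ fun s _ => hmG1 _
  have hmA : MeasurableSet A := by
    have h : A = {ω | G2 ω = (n2 : ℕ∞)} ∩ {ω | G1 ω ≤ (t : ℕ∞)}ᶜ := rfl
    rw [h]; exact (hmG2 _).inter hmLe.compl
  have hApos : μ A ≠ 0 := hctrl.ne'
  have hAfin : μ A ≠ ⊤ := measure_ne_top μ A
  -- conditional probability formula
  have hcPeq : ∀ B : Set Ω, cP μ A B = ((μ A)⁻¹ * μ (A ∩ B)).toReal := fun B => by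
    rw [cP, ProbabilityTheory.cond_apply hmA μ B]
  -- zero weights for null cohorts
  have hw0 : ∀ s1 : ℕ∞, μ {ω | G1 ω = s1 ∧ G2 ω = (n2 : ℕ∞)} = 0 →
      cP μ A {ω | G1 ω = s1} = 0 := by
    intro s1 h0
    rw [hcPeq]
    have hsub : A ∩ {ω | G1 ω = s1} ⊆ {ω | G1 ω = s1 ∧ G2 ω = (n2 : ℕ∞)} := by
      rintro ω ⟨⟨hg, _⟩, hs⟩; exact ⟨hs, hg⟩
    rw [measure_mono_null hsub h0, mul_zero, ENNReal.toReal_zero]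
  -- decomposition of A
  have hdecompA : A = (⋃ s ∈ Finset.Icc (t + 1) T, (A ∩ {ω | G1 ω = (s : ℕ∞)}))
      ∪ (A ∩ {ω | G1 ω = ⊤}) := by
    ext ω
    simp only [Set.mem_union, Set.mem_iUnion, Set.mem_inter_iff, Set.mem_setOf_eq,
      Finset.mem_Icc, exists_prop, hAdef]
    constructor
    · intro h
      rcases hG1mem ω with htop | ⟨h2, hT'⟩
      · exact Or.inr ⟨h, htop⟩
      · left
        have hne : G1 ω ≠ ⊤ := ne_top_of_le_ne_top (ENat.coe_ne_top T) hT'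
        obtain ⟨m, hm⟩ := aux_nat_of_ne_top _ hne
        have hmt : ¬ (m : ℕ∞) ≤ (t : ℕ∞) := hm ▸ h.2
        have hmt' : t < m := by
          by_contra hc
          exact hmt (by exact_mod_cast not_lt.mp hc)
        have hmT : m ≤ T := by rw [hm] at hT'; exact_mod_cast hT'
        exact ⟨m, ⟨hmt', hmT⟩, h, hm⟩
    · rintro (⟨m, _, hA', _⟩ | ⟨hA', _⟩) <;> exact hA'
  have hdisj : (↑(Finset.Icc (t + 1) T) : Set ℕ).PairwiseDisjoint
      (fun s => A ∩ {ω | G1 ω = (s : ℕ∞)}) := by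
    intro i _ j _ hij
    refine Set.disjoint_left.mpr ?_
    rintro ω ⟨_, hi⟩ ⟨_, hj⟩
    exact hij (by exact_mod_cast (hi : G1 ω = (i : ℕ∞)).symm.trans hj)
  have hdisjtop : Disjoint (⋃ s ∈ Finset.Icc (t + 1) T, (A ∩ {ω | G1 ω = (s : ℕ∞)}))
      (A ∩ {ω | G1 ω = ⊤}) := by
    refine Set.disjoint_left.mpr ?_
    intro ω hω hω2
    simp only [Set.mem_iUnion, Set.mem_inter_iff, Set.mem_setOf_eq, exists_prop] at hω hω2
    obtain ⟨m, _, _, hm⟩ := hω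
    exact ENat.coe_ne_top m (hm.symm.trans hω2.2)
  have hmeas_sum : (∑ s ∈ Finset.Icc (t + 1) T, μ (A ∩ {ω | G1 ω = (s : ℕ∞)}))
      + μ (A ∩ {ω | G1 ω = ⊤}) = μ A := by
    rw [← measure_biUnion_finset hdisj (fun s _ => hmA.inter (hmG1 _)),
      ← measure_union hdisjtop (hmA.inter (hmG1 ⊤)), ← hdecompA]
  -- the weights sum to one
  have hwsum : (∑ s ∈ Finset.Icc (t + 1) T, cP μ A {ω | G1 ω = (s : ℕ∞)})
      + cP μ A {ω | G1 ω = ⊤} = 1 := by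
    have hfin : ∀ B : Set Ω, (μ A)⁻¹ * μ (A ∩ B) ≠ ⊤ :=
      fun B => ENNReal.mul_ne_top (ENNReal.inv_ne_top.mpr hApos) (measure_ne_top μ _)
    simp only [hcPeq]
    rw [← ENNReal.toReal_sum (fun s _ => hfin _),
      ← ENNReal.toReal_add
        (ENNReal.sum_lt_top.mpr fun s _ => (hfin _).lt_top).ne (hfin _),
      ← Finset.mul_sum, ← mul_add, hmeas_sum, ENNReal.inv_mul_cancel hApos hAfin,
      ENNReal.toReal_one]
  -- No-anticipation consequence : ATT = ATT2 for cohorts treated (by event 1) after u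
  have hATTeq : ∀ s1 : ℕ∞, InCohort T s1 → 0 < μ {ω | G1 ω = s1 ∧ G2 ω = (n2 : ℕ∞)} →
      ∀ u : ℕ, 1 ≤ u → (n2 : ℕ∞) ≤ (u : ℕ∞) → (u : ℕ∞) < s1 →
      ATT μ G1 G2 Y s1 (n2 : ℕ∞) u = ATT2 μ G1 G2 Y s1 (n2 : ℕ∞) u := by
    intro s1 hs1 hpos u hu1 hgu hus
    have hmax : (u : ℕ∞) < max s1 (n2 : ℕ∞) := lt_of_lt_of_le hus (le_max_left _ _)
    have hNA3 := (hNA s1 (n2 : ℕ∞) hs1 hg2 hpos u hu1 hmax).2.2 ⟨hgu, hus⟩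
    unfold ATT ATT2
    rw [aux_cE_sub μ _ (hYint u s1 (n2 : ℕ∞)) (hYint u 0 0),
      aux_cE_sub μ _ (hYint u 0 (n2 : ℕ∞)) (hYint u 0 0)]
    rw [show cE μ {ω | G1 ω = s1 ∧ G2 ω = (n2 : ℕ∞)} (Y u s1 (n2 : ℕ∞))
        = cE μ {ω | G1 ω = s1 ∧ G2 ω = (n2 : ℕ∞)} (Y u 0 (n2 : ℕ∞)) from hNA3]
  -- arithmetic facts
  have h1g1 : 1 ≤ g1 - 1 := by omega
  have hg2t : (n2 : ℕ∞) ≤ (t : ℕ∞) := by exact_mod_cast (by omega : n2 ≤ t)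
  have hg2g11 : (n2 : ℕ∞) ≤ ((g1 - 1 : ℕ) : ℕ∞) := by exact_mod_cast (by omega : n2 ≤ g1 - 1)
  have hIng1 : InCohort T (g1 : ℕ∞) :=
    Or.inr ⟨by exact_mod_cast hg1, by exact_mod_cast hg1T⟩
  -- the key constant
  set K := ATT2 μ G1 G2 Y (g1 : ℕ∞) (n2 : ℕ∞) t - ATT2 μ G1 G2 Y (g1 : ℕ∞) (n2 : ℕ∞) (g1 - 1)
    with hKdef
  -- every summand equals K times the weight
  have hterm : ∀ s1 : ℕ∞, InCohort T s1 → (t : ℕ∞) < s1 →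
      (ATT μ G1 G2 Y s1 (n2 : ℕ∞) t - ATT μ G1 G2 Y s1 (n2 : ℕ∞) (g1 - 1))
        * cP μ A {ω | G1 ω = s1}
      = K * cP μ A {ω | G1 ω = s1} := by
    intro s1 hs1 hts
    rcases eq_or_ne (μ {ω | G1 ω = s1 ∧ G2 ω = (n2 : ℕ∞)}) 0 with h0 | h0
    · rw [hw0 s1 h0, mul_zero, mul_zero]
    · have hpos : 0 < μ {ω | G1 ω = s1 ∧ G2 ω = (n2 : ℕ∞)} := pos_iff_ne_zero.mpr h0
      have hg11s : ((g1 - 1 : ℕ) : ℕ∞) < s1 :=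
        lt_of_le_of_lt (by exact_mod_cast (by omega : g1 - 1 ≤ t)) hts
      rw [hATTeq s1 hs1 hpos t (by omega) hg2t hts,
        hATTeq s1 hs1 hpos (g1 - 1) h1g1 hg2g11 hg11s]
      congr 1
      rw [hKdef]
      exact hPTE1 g1 s1 (n2 : ℕ∞) t hg1 hg1T hs1 hg2 hg2t hts.le hcoh hpos |>.symm
  -- rewrite the sum
  have hsum_eq : (∑ s ∈ Finset.Icc (t + 1) T,
        (ATT μ G1 G2 Y (s : ℕ∞) (n2 : ℕ∞) t - ATT μ G1 G2 Y (s : ℕ∞) (n2 : ℕ∞) (g1 - 1))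
          * cP μ A {ω | G1 ω = (s : ℕ∞)})
      + (ATT μ G1 G2 Y ⊤ (n2 : ℕ∞) t - ATT μ G1 G2 Y ⊤ (n2 : ℕ∞) (g1 - 1))
          * cP μ A {ω | G1 ω = ⊤} = K := by
    have hs1 : ∀ s ∈ Finset.Icc (t + 1) T,
        (ATT μ G1 G2 Y (s : ℕ∞) (n2 : ℕ∞) t - ATT μ G1 G2 Y (s : ℕ∞) (n2 : ℕ∞) (g1 - 1))
          * cP μ A {ω | G1 ω = (s : ℕ∞)}
        = K * cP μ A {ω | G1 ω = (s : ℕ∞)} := by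
      intro s hs
      rw [Finset.mem_Icc] at hs
      refine hterm (s : ℕ∞) (Or.inr ⟨?_, ?_⟩) ?_
      · exact_mod_cast (by omega : 2 ≤ s)
      · exact_mod_cast hs.2
      · exact_mod_cast (by omega : t < s)
    rw [Finset.sum_congr rfl hs1, hterm ⊤ (Or.inl rfl) (WithTop.coe_lt_top t),
      ← Finset.mul_sum, ← mul_add, hwsum, mul_one]
  -- additive effects and the baseline
  have hAddEq := hAdd (g1 : ℕ∞) (n2 : ℕ∞) t hIng1 hg2 hcoh
  have hBase : ATT μ G1 G2 Y (g1 : ℕ∞) (n2 : ℕ∞) (g1 - 1)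
      = ATT2 μ G1 G2 Y (g1 : ℕ∞) (n2 : ℕ∞) (g1 - 1) :=
    hATTeq (g1 : ℕ∞) hIng1 hcoh (g1 - 1) h1g1 hg2g11
      (by exact_mod_cast (by omega : g1 - 1 < g1))
  rw [hsum_eq, hAddEq, hBase, hKdef]
  ring
end
end
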